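/- arXiv:2312.01757 — 9 statements merged into one kernel-verified Lean document; each statement's English description precedes it below -/
import Mathlib

section
/- Let $1 \le p \le 2$. There exists a constant $C_p$ such that for any finitely many functions $f_1, \dots, f_N \in L^p(\mathbb{R})$, one has $\left(\sum_{j=1}^N \|f_j\|_p^2\right)^{1/2} \le C_p \int_0^1 \left\|\sum_{j=1}^N r_j(t) f_j\right\|_p \, dt$, where $r_j$ are the Rademacher functions. -/
open MeasureTheory
open scoped ENNReal

/-- The Rademacher functions `r_n(t) = sign (sin (2^n π t))` on `[0,1]`. -/
noncomputable def rademacher (n : ℕ) (t : ℝ) : ℝ :=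
  Real.sign (Real.sin (2 ^ n * Real.pi * t))

/-!
On the dyadic intervals of length `2⁻ᴺ` the functions `r₁, …, r_N` are constant and run through
all `2ᴺ` sign patterns, so `∫₀¹ ‖∑ rⱼ(t) fⱼ‖ dt` is the average of `‖∑ εⱼ fⱼ‖` over all signs `ε`.
Khintchine's inequality `(∑ aⱼ²)^{1/2} ≤ √3 · avg_ε |∑ εⱼ aⱼ|`, which follows from
`avg (∑ εⱼ aⱼ)² = ∑ aⱼ²`, `avg (∑ εⱼ aⱼ)⁴ ≤ 3 (∑ aⱼ²)²` and Hölder, applied at each point `x`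
to `aⱼ = fⱼ(x)` and combined with the triangle inequality in `Lᵖ`, bounds the square function
`S = (∑ |fⱼ|²)^{1/2}` by `‖S‖_p ≤ √3 ∫₀¹ ‖∑ rⱼ(t) fⱼ‖_p dt`. Finally, for `p ≤ 2`, Minkowski's
integral inequality in `ℓ^{2/p}` applied to `(|fⱼ|ᵖ)ⱼ` gives `(∑ ‖fⱼ‖_p²)^{1/2} ≤ ‖S‖_p`.
-/

open Finset

lemma sum_sq_pow_three_le {ι : Type*} (s : Finset ι) (g : ι → ℝ) :
    (∑ i ∈ s, g i ^ 2) ^ 3 ≤ (∑ i ∈ s, |g i|) ^ 2 * ∑ i ∈ s, g i ^ 4 := by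
  set B := ∑ i ∈ s, g i ^ 2
  have hB : 0 ≤ B := by positivity
  have h₁ : B ^ 2 ≤ (∑ i ∈ s, |g i|) * ∑ i ∈ s, |g i| ^ 3 :=
    sum_sq_le_sum_mul_sum_of_sq_le_mul s (fun i _ => abs_nonneg _) (fun i _ => by positivity)
      fun i _ => le_of_eq (by rw [← sq_abs (g i)]; ring)
  have h₂ : (∑ i ∈ s, |g i| ^ 3) ^ 2 ≤ B * ∑ i ∈ s, g i ^ 4 :=
    sum_sq_le_sum_mul_sum_of_sq_le_mul s (fun i _ => sq_nonneg _) (fun i _ => by positivity)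
      fun i _ => le_of_eq (by rw [← sq_abs (g i), ← (Even.pow_abs ⟨2, rfl⟩ (g i))]; ring)
  rcases hB.eq_or_lt with hB0 | hBpos
  · rw [← hB0, zero_pow three_ne_zero]; positivity
  · refine le_of_mul_le_mul_left ?_ hBpos
    nlinarith [mul_le_mul_of_nonneg_left h₂ (sq_nonneg (∑ i ∈ s, |g i|)),
      pow_le_pow_left₀ (sq_nonneg B) h₁ 2]

section SquareFunction

variable {α ι E : Type*} [MeasurableSpace α] {μ : Measure α} [NormedAddCommGroup E]
  {p : ℝ≥0∞}

lemma MeasureTheory.Lp.norm_rpow_eq_integral_norm_rpow (hp₀ : p ≠ 0) (hp : p ≠ ∞) (f : Lp E p μ) :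
    ‖f‖ ^ p.toReal = ∫ x, ‖f x‖ ^ p.toReal ∂μ := by
  rw [Lp.norm_def, toReal_eLpNorm (Lp.aestronglyMeasurable f),
    lpNorm_eq_integral_norm_rpow_toReal hp₀ hp (Lp.aestronglyMeasurable f),
    Real.rpow_inv_rpow (integral_nonneg fun x => by positivity)
      (ENNReal.toReal_ne_zero.mpr ⟨hp₀, hp⟩)]

variable [Fintype ι] [Fact (1 ≤ p)]

theorem sum_sq_norm_rpow_le_integral (hp2 : p ≤ 2) (f : ι → Lp E p μ) :
    (∑ i, ‖f i‖ ^ 2) ^ (p.toReal / 2) ≤ ∫ x, (∑ i, ‖f i x‖ ^ 2) ^ (p.toReal / 2) ∂μ := by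
  have hp₀ : p ≠ 0 := (zero_lt_one.trans_le Fact.out).ne'
  have hp : p ≠ ∞ := (hp2.trans_lt ENNReal.ofNat_lt_top).ne
  set q := p.toReal
  have hq : 0 < q := ENNReal.toReal_pos hp₀ hp
  have hq2 : q ≤ 2 := ENNReal.toReal_le_of_le_ofReal zero_le_two (by simpa using hp2)
  set r := ENNReal.ofReal (2 / q)
  have hr : r.toReal = 2 / q := ENNReal.toReal_ofReal (by positivity)
  have : Fact (1 ≤ r) := ⟨ENNReal.one_le_ofReal.mpr ((one_le_div hq).mpr hq2)⟩
  have hnorm (v : ι → ℝ) (hv : ∀ i, 0 ≤ v i) :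
      ‖WithLp.toLp r fun i => v i ^ q‖ = (∑ i, v i ^ 2) ^ (q / 2) := by
    rw [PiLp.norm_eq_sum (by rw [hr]; positivity), hr, one_div_div]
    congr 1
    refine sum_congr rfl fun i _ => ?_
    rw [PiLp.toLp_apply, Real.norm_eq_abs, abs_of_nonneg (by have := hv i; positivity),
      ← Real.rpow_mul (hv i), mul_div_cancel₀ _ hq.ne', Real.rpow_two]
  have hint (i : ι) : Integrable (fun x => ‖f i x‖ ^ q) μ :=
    (Lp.memLp (f i)).integrable_norm_rpow hp₀ hp
  calc (∑ i, ‖f i‖ ^ 2) ^ (q / 2)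
      = ‖∫ x, WithLp.toLp r (fun i => ‖f i x‖ ^ q) ∂μ‖ := by
        rw [← hnorm _ fun i => norm_nonneg _]
        congr 1
        ext i
        rw [eval_integral_piLp hint, PiLp.toLp_apply, Lp.norm_rpow_eq_integral_norm_rpow hp₀ hp]
    _ ≤ ∫ x, ‖WithLp.toLp r (fun i => ‖f i x‖ ^ q)‖ ∂μ := norm_integral_le_integral_norm _
    _ = ∫ x, (∑ i, ‖f i x‖ ^ 2) ^ (q / 2) ∂μ := by
        simp only [hnorm _ fun i => norm_nonneg _]

variable {F : Type*} [NormedAddCommGroup F]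

theorem sum_sq_norm_le_sq_norm_of_ae_le (hp2 : p ≤ 2) (f : ι → Lp E p μ) (g : Lp F p μ)
    (hfg : ∀ᵐ x ∂μ, √(∑ i, ‖f i x‖ ^ 2) ≤ ‖g x‖) :
    ∑ i, ‖f i‖ ^ 2 ≤ ‖g‖ ^ 2 := by
  have hp₀ : p ≠ 0 := (zero_lt_one.trans_le Fact.out).ne'
  have hp : p ≠ ∞ := (hp2.trans_lt ENNReal.ofNat_lt_top).ne
  have hq : 0 < p.toReal / 2 := by have := ENNReal.toReal_pos hp₀ hp; positivity
  have hsqrt (s : ℝ) (hs : 0 ≤ s) : √s ^ p.toReal = s ^ (p.toReal / 2) := by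
    rw [Real.sqrt_eq_rpow, ← Real.rpow_mul hs, one_div_mul_eq_div]
  rw [← Real.rpow_le_rpow_iff (by positivity) (by positivity) hq, ← Real.rpow_natCast,
    ← Real.rpow_mul (norm_nonneg g), Nat.cast_ofNat, mul_div_cancel₀ _ two_ne_zero,
    Lp.norm_rpow_eq_integral_norm_rpow hp₀ hp]
  refine (sum_sq_norm_rpow_le_integral hp2 f).trans <|
    integral_mono_of_nonneg (.of_forall fun x => by positivity)
      ((Lp.memLp g).integrable_norm_rpow hp₀ hp) ?_
  filter_upwards [hfg] with x hx
  rw [← hsqrt _ (by positivity)]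
  gcongr

end SquareFunction

-- the value of `rademacher (i + 1)` on the dyadic interval `(j / 2 ^ N, (j + 1) / 2 ^ N)`
def dyadicSign (N : ℕ) (i : Fin N) (j : ℕ) : ℝ := (-1) ^ (j / 2 ^ (N - 1 - i))

def dyadicSum (N : ℕ) (a : Fin N → ℝ) (j : ℕ) : ℝ := ∑ i, dyadicSign N i j * a i

section Khintchine

variable {N : ℕ}

lemma dyadicSign_succ_zero {j : ℕ} (hj : j < 2 ^ N) : dyadicSign (N + 1) 0 j = 1 := by
  simp [dyadicSign, Nat.div_eq_of_lt hj]

lemma dyadicSign_succ_zero_two_pow_add {j : ℕ} (hj : j < 2 ^ N) :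
    dyadicSign (N + 1) 0 (2 ^ N + j) = -1 := by
  simp [dyadicSign, Nat.add_div_left, Nat.div_eq_of_lt hj]

lemma dyadicSign_succ_succ (i : Fin N) (j : ℕ) :
    dyadicSign (N + 1) i.succ j = dyadicSign N i j := by
  simp only [dyadicSign, Fin.val_succ]
  congr 3
  omega

lemma dyadicSign_succ_succ_two_pow_add (i : Fin N) (j : ℕ) :
    dyadicSign (N + 1) i.succ (2 ^ N + j) = dyadicSign N i j := by
  have hN : 2 ^ N = 2 ^ (N - 1 - i) * 2 ^ (i + 1 : ℕ) := by
    rw [← pow_add]; congr 1; omega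
  rw [dyadicSign_succ_succ, dyadicSign, dyadicSign, hN, Nat.mul_add_div (by positivity), pow_add,
    (Nat.even_pow.mpr ⟨even_two, Nat.succ_ne_zero _⟩).neg_one_pow, one_mul]

lemma dyadicSum_succ (a : Fin (N + 1) → ℝ) {j : ℕ} (hj : j < 2 ^ N) :
    dyadicSum (N + 1) a j = dyadicSum N (Fin.tail a) j + a 0 := by
  simp [dyadicSum, Fin.sum_univ_succ, dyadicSign_succ_zero hj, dyadicSign_succ_succ, Fin.tail,
    add_comm]

lemma dyadicSum_succ_two_pow_add (a : Fin (N + 1) → ℝ) {j : ℕ} (hj : j < 2 ^ N) :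
    dyadicSum (N + 1) a (2 ^ N + j) = dyadicSum N (Fin.tail a) j - a 0 := by
  simp [dyadicSum, Fin.sum_univ_succ, dyadicSign_succ_zero_two_pow_add hj,
    dyadicSign_succ_succ_two_pow_add, Fin.tail, sub_eq_neg_add]

lemma sum_dyadicSum_succ (Φ : ℝ → ℝ) (a : Fin (N + 1) → ℝ) :
    ∑ j ∈ range (2 ^ (N + 1)), Φ (dyadicSum (N + 1) a j) =
      ∑ j ∈ range (2 ^ N), (Φ (dyadicSum N (Fin.tail a) j + a 0) +
        Φ (dyadicSum N (Fin.tail a) j - a 0)) := by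
  rw [pow_succ, mul_two, sum_range_add, sum_add_distrib]
  congr 1 <;> refine sum_congr rfl fun j hj => ?_
  · rw [dyadicSum_succ a (mem_range.mp hj)]
  · rw [dyadicSum_succ_two_pow_add a (mem_range.mp hj)]

lemma sum_dyadicSum_sq (a : Fin N → ℝ) :
    ∑ j ∈ range (2 ^ N), dyadicSum N a j ^ 2 = 2 ^ N * ∑ i, a i ^ 2 := by
  induction N with
  | zero => simp [dyadicSum]
  | succ N ih =>
    have hparallelogram (x : ℝ) : (x + a 0) ^ 2 + (x - a 0) ^ 2 = 2 * x ^ 2 + 2 * a 0 ^ 2 := by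
      ring
    simp only [sum_dyadicSum_succ (· ^ 2), hparallelogram, sum_add_distrib, ← mul_sum, ih,
      sum_const, card_range, nsmul_eq_mul, Fin.sum_univ_succ, Fin.tail]
    push_cast
    ring

lemma sum_dyadicSum_pow_four_le (a : Fin N → ℝ) :
    ∑ j ∈ range (2 ^ N), dyadicSum N a j ^ 4 ≤ 3 * 2 ^ N * (∑ i, a i ^ 2) ^ 2 := by
  induction N with
  | zero => simp [dyadicSum]
  | succ N ih =>
    have hexpand (x : ℝ) : (x + a 0) ^ 4 + (x - a 0) ^ 4 =
        2 * x ^ 4 + 12 * a 0 ^ 2 * x ^ 2 + 2 * a 0 ^ 4 := by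
      ring
    simp only [sum_dyadicSum_succ (· ^ 4), hexpand, sum_add_distrib, ← mul_sum,
      sum_dyadicSum_sq, sum_const, card_range, nsmul_eq_mul, Fin.sum_univ_succ]
    have := ih (Fin.tail a)
    have hV : 0 ≤ ∑ i : Fin N, Fin.tail a i ^ 2 := by positivity
    simp only [Fin.tail] at this hV ⊢
    push_cast
    rw [pow_succ (2 : ℝ) N]
    nlinarith [mul_nonneg (pow_pos (two_pos (α := ℝ)) N).le (pow_nonneg (sq_nonneg (a 0)) 2),
      mul_nonneg (pow_pos (two_pos (α := ℝ)) N).le (mul_nonneg (sq_nonneg (a 0)) hV)]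


theorem khintchine_inequality (a : Fin N → ℝ) :
    √(∑ i, a i ^ 2) ≤ √3 * ((2 ^ N)⁻¹ * ∑ j ∈ range (2 ^ N), |dyadicSum N a j|) := by
  set V := ∑ i, a i ^ 2
  set A := ∑ j ∈ range (2 ^ N), |dyadicSum N a j|
  have hcube : (2 ^ N * V) ^ 3 ≤ A ^ 2 * (3 * 2 ^ N * V ^ 2) := by
    rw [← sum_dyadicSum_sq]
    exact (sum_sq_pow_three_le _ _).trans (by gcongr; exact sum_dyadicSum_pow_four_le a)
  refine Real.sqrt_le_iff.mpr ⟨by positivity, ?_⟩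
  rcases (show 0 ≤ V by positivity).eq_or_lt with hV0 | hVpos
  · rw [← hV0]; positivity
  · rw [mul_pow, Real.sq_sqrt zero_le_three, mul_pow, inv_pow, ← div_eq_inv_mul,
      mul_div_assoc', le_div_iff₀ (by positivity)]
    have : 0 < 2 ^ N * V ^ 2 := by positivity
    nlinarith

end Khintchine

lemma rademacher_eq_neg_one_pow {n k : ℕ} {t : ℝ} (h₁ : k < 2 ^ n * t) (h₂ : 2 ^ n * t < k + 1) :
    rademacher n t = (-1) ^ k := by
  have hsin : Real.sin (2 ^ n * Real.pi * t) = (-1) ^ k * Real.sin (Real.pi * (2 ^ n * t - k)) := by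
    rw [show 2 ^ n * Real.pi * t = Real.pi * (2 ^ n * t - k) + (k : ℤ) * Real.pi by push_cast; ring,
      Real.sin_add_int_mul_pi, zpow_natCast]
  have hpos : 0 < Real.sin (Real.pi * (2 ^ n * t - k)) :=
    Real.sin_pos_of_pos_of_lt_pi (by nlinarith [Real.pi_pos]) (by nlinarith [Real.pi_pos])
  rcases neg_one_pow_eq_or ℝ k with hk | hk <;>
    simp [rademacher, hsin, hk, Real.sign_of_pos hpos, Real.sign_of_neg, hpos]

lemma rademacher_succ_eq_dyadicSign {N j : ℕ} (i : Fin N) {t : ℝ}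
    (ht : t ∈ Set.Ioo (j / 2 ^ N : ℝ) ((j + 1) / 2 ^ N)) :
    rademacher (i + 1) t = dyadicSign N i j := by
  set m := N - 1 - i
  have hN : (2 : ℝ) ^ N = 2 ^ (i + 1 : ℕ) * 2 ^ m := by rw [← pow_add]; congr 1; omega
  have hm : (0 : ℝ) < 2 ^ m := by positivity
  have hscale (x : ℝ) : 2 ^ (i + 1 : ℕ) * (x / 2 ^ N) = x / 2 ^ m := by
    rw [hN]; field_simp
  have hfloor : ((j / 2 ^ m : ℕ) : ℝ) ≤ j / 2 ^ m := by exact_mod_cast Nat.cast_div_le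
  have hceil : (j + 1 : ℝ) / 2 ^ m ≤ (j / 2 ^ m : ℕ) + 1 := by
    rw [div_le_iff₀ hm]
    have := Nat.lt_div_mul_add (a := j) (pow_pos two_pos m)
    exact_mod_cast (by rw [add_mul, one_mul]; omega : j + 1 ≤ (j / 2 ^ m + 1) * 2 ^ m)
  refine rademacher_eq_neg_one_pow ?_ ?_
  · have := mul_lt_mul_of_pos_left ht.1 (pow_pos two_pos (i + 1 : ℕ) : (0 : ℝ) < _)
    rw [hscale] at this
    linarith
  · have := mul_lt_mul_of_pos_left ht.2 (pow_pos two_pos (i + 1 : ℕ) : (0 : ℝ) < _)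
    rw [hscale] at this
    linarith

lemma setIntegral_Ioo_zero_one_eq_of_dyadic {E : Type*} [NormedAddCommGroup E] [NormedSpace ℝ E]
    [CompleteSpace E] (N : ℕ) (φ : ℕ → E) {H : ℝ → E}
    (hH : ∀ j : ℕ, j < 2 ^ N → ∀ t ∈ Set.Ioo (j / 2 ^ N : ℝ) ((j + 1) / 2 ^ N), H t = φ j) :
    ∫ t in Set.Ioo (0 : ℝ) 1, H t = (2 ^ N : ℝ)⁻¹ • ∑ j ∈ range (2 ^ N), φ j := by
  set a : ℕ → ℝ := fun j => j / 2 ^ N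
  have hle (j : ℕ) : a j ≤ a (j + 1) := by simp only [a]; gcongr; simp
  have hEqOn {j : ℕ} (hj : j < 2 ^ N) : (Set.Ioo (a j) (a (j + 1))).EqOn H fun _ => φ j :=
    fun t ht => hH j hj t (by simpa [a] using ht)
  have hpiece : ∀ j < 2 ^ N, ∫ t in a j..a (j + 1), H t = (2 ^ N : ℝ)⁻¹ • φ j := by
    intro j hj
    rw [intervalIntegral.integral_congr_Ioo_of_le (hle j) (hEqOn hj),
      intervalIntegral.integral_const]
    congr 1
    simp only [a]
    push_cast
    ring
  have hint : ∀ j < 2 ^ N, IntervalIntegrable H volume (a j) (a (j + 1)) := fun j hj =>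
    (intervalIntegrable_congr_uIoo (by rw [Set.uIoo_of_le (hle j)]; exact hEqOn hj)).mpr
      intervalIntegrable_const
  calc ∫ t in Set.Ioo (0 : ℝ) 1, H t = ∫ t in a 0..a (2 ^ N), H t := by
        rw [intervalIntegral.integral_of_le (by simp [a]), integral_Ioc_eq_integral_Ioo]
        simp [a]
    _ = ∑ j ∈ range (2 ^ N), (2 ^ N : ℝ)⁻¹ • φ j := by
        rw [← intervalIntegral.sum_integral_adjacent_intervals hint]
        exact sum_congr rfl fun j hj => hpiece j (mem_range.mp hj)
    _ = (2 ^ N : ℝ)⁻¹ • ∑ j ∈ range (2 ^ N), φ j := (smul_sum ..).symm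

theorem ae_sqrt_sum_sq_le_khintchine {α : Type*} [MeasurableSpace α] {μ : Measure α}
    {p : ℝ≥0∞} [Fact (1 ≤ p)] {N : ℕ} (f : Fin N → Lp ℝ p μ) :
    ∀ᵐ x ∂μ, √(∑ i, ‖f i x‖ ^ 2) ≤
      ‖((√3 * (2 ^ N)⁻¹) • ∑ j ∈ range (2 ^ N), |∑ i, dyadicSign N i j • f i|) x‖ := by
  set F : ℕ → Lp ℝ p μ := fun j => ∑ i, dyadicSign N i j • f i
  have hsigned : ∀ᵐ x ∂μ, ∀ j : ℕ, F j x = dyadicSum N (fun i => f i x) j := by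
    refine ae_all_iff.mpr fun j => ?_
    filter_upwards [Lp.coeFn_fun_finsetSum univ fun i => dyadicSign N i j • f i,
      ae_all_iff.mpr fun i => Lp.coeFn_smul (dyadicSign N i j) (f i)] with x hsum hsmul
    rw [hsum, dyadicSum]
    simp only [hsmul, Pi.smul_apply, smul_eq_mul]
  filter_upwards [hsigned, Lp.coeFn_smul (√3 * (2 ^ N)⁻¹) (∑ j ∈ range (2 ^ N), |F j|),
    Lp.coeFn_fun_finsetSum (range (2 ^ N)) fun j => |F j|,
    ae_all_iff.mpr fun j => Lp.coeFn_abs (F j)] with x hsigned hsmul hsum habs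
  rw [hsmul, Pi.smul_apply, hsum, smul_eq_mul, norm_mul, Real.norm_of_nonneg (by positivity),
    Real.norm_of_nonneg (sum_nonneg fun j _ => by rw [habs]; positivity)]
  simp only [Real.norm_eq_abs, sq_abs, habs, hsigned, mul_assoc]
  exact khintchine_inequality _

/-- for `1 ≤ p ≤ 2`, `L^p(ℝ)` has cotype 2: there is a constant `C_p` with
`(∑ ‖f_j‖_p^2)^{1/2} ≤ C_p ∫_0^1 ‖∑ r_j(t) f_j‖_p dt` for all finite families. -/
theorem Lp_cotype_two
    (p : ℝ≥0∞) [Fact (1 ≤ p)] (hp2 : p ≤ 2) :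
    ∃ C : ℝ, ∀ (N : ℕ) (f : Fin N → Lp ℝ p (volume : Measure ℝ)),
      (∑ j, ‖f j‖ ^ 2) ^ (1/2 : ℝ) ≤
        C * ∫ t in Set.Ioo (0:ℝ) 1, ‖∑ j : Fin N, rademacher ((j : ℕ) + 1) t • f j‖ := by
  refine ⟨√3, fun N f => ?_⟩
  set F : ℕ → Lp ℝ p volume := fun j => ∑ i, dyadicSign N i j • f i
  have hint : ∫ t in Set.Ioo (0 : ℝ) 1, ‖∑ i : Fin N, rademacher (i + 1) t • f i‖ =
      (2 ^ N)⁻¹ * ∑ j ∈ range (2 ^ N), ‖F j‖ :=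
    setIntegral_Ioo_zero_one_eq_of_dyadic N (fun j => ‖F j‖) fun j _ t ht => by
      simp only [F, rademacher_succ_eq_dyadicSign _ ht]
  set g : Lp ℝ p volume := (√3 * (2 ^ N)⁻¹) • ∑ j ∈ range (2 ^ N), |F j|
  have hg : ‖g‖ ≤ √3 * ((2 ^ N)⁻¹ * ∑ j ∈ range (2 ^ N), ‖F j‖) := by
    rw [norm_smul, Real.norm_of_nonneg (by positivity), mul_assoc]
    gcongr
    exact (norm_sum_le _ _).trans_eq (sum_congr rfl fun j _ => norm_abs_eq_norm (F j))
  rw [← Real.sqrt_eq_rpow, hint]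
  calc √(∑ i, ‖f i‖ ^ 2) ≤ √(‖g‖ ^ 2) :=
        Real.sqrt_le_sqrt (sum_sq_norm_le_sq_norm_of_ae_le hp2 f g (ae_sqrt_sum_sq_le_khintchine f))
    _ = ‖g‖ := Real.sqrt_sq (norm_nonneg g)
    _ ≤ _ := hg
end

section
/- Let $1 \le p < \infty$, let $g \in L^p(\mathbb{R})$ with $\|g\|_p = 1$, and let $\delta > 0$ be such that $\|T_a g - T_b g\|_p \le 1/2$ whenever $|a - b| \le \delta$. Let $k \in \mathbb{Z}$, and let $\lambda_1, \dots, \lambda_n \in [k\delta, (k+1)\delta)$ and nonnegative scalars $a_1, \dots, a_n$ be given. Then $\left\|\sum_{j=1}^n a_j T_{\lambda_j} g\right\|_p \ge \frac{1}{2} \sum_{j=1}^n a_j$. -/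
open MeasureTheory
open scoped ENNReal

lemma translate_memℒp (p : ℝ≥0∞) (g : ℝ → ℝ) (hg : MemLp g p (volume : Measure ℝ))
    (c : ℝ) : MemLp (fun x => g (x - c)) p (volume : Measure ℝ) := by
  have hmp : MeasurePreserving (fun x : ℝ => x - c) volume volume := by
    simpa [sub_eq_add_neg] using measurePreserving_add_right (volume : Measure ℝ) (-c)
  exact hg.comp_measurePreserving hmp

lemma translate_eLpNorm (p : ℝ≥0∞) (g : ℝ → ℝ) (hg : MemLp g p (volume : Measure ℝ))
    (c : ℝ) : eLpNorm (fun x => g (x - c)) p volume = eLpNorm g p volume := by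
  have hmp : MeasurePreserving (fun x : ℝ => x - c) volume volume := by
    simpa [sub_eq_add_neg] using measurePreserving_add_right (volume : Measure ℝ) (-c)
  exact eLpNorm_comp_measurePreserving hg.1 hmp

/-- lower bound for nonnegative combinations of translates within one block.
If `‖g‖_p = 1` and `δ > 0` is such that `‖T_a g - T_b g‖_p ≤ 1/2` whenever `|a - b| ≤ δ`,
and `λ_1, …, λ_n ∈ [kδ, (k+1)δ)`, `a_j ≥ 0`, then
`‖∑ a_j T_{λ_j} g‖_p ≥ (1/2) ∑ a_j`. -/
theorem block_lower_bound
    (p : ℝ≥0∞) (hp : 1 ≤ p) (hp' : p ≠ ∞)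
    (g : ℝ → ℝ) (hg : MemLp g p (volume : Measure ℝ))
    (hnorm : eLpNorm g p volume = 1)
    (δ : ℝ) (hδ : 0 < δ)
    (hδg : ∀ a b : ℝ, |a - b| ≤ δ →
      eLpNorm (fun x => g (x - a) - g (x - b)) p volume ≤ 1/2)
    (k : ℤ) (n : ℕ) (lam : Fin n → ℝ)
    (hlam : ∀ j, lam j ∈ Set.Ico ((k : ℝ) * δ) (((k : ℝ) + 1) * δ))
    (a : Fin n → ℝ) (ha : ∀ j, 0 ≤ a j) :
    ENNReal.ofReal ((1/2) * ∑ j, a j) ≤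
      eLpNorm (fun x => ∑ j, a j * g (x - lam j)) p volume := by
  set c : ℝ := (k : ℝ) * δ with hc
  set A : ℝ := ∑ j, a j with hA
  have hA0 : 0 ≤ A := Finset.sum_nonneg fun j _ => ha j
  -- the difference function
  set F : ℝ → ℝ := fun x => ∑ j, a j * g (x - lam j) with hF
  set D : ℝ → ℝ := fun x => ∑ j, a j * (g (x - c) - g (x - lam j)) with hD
  have hFm : AEStronglyMeasurable F volume := by
    apply Finset.aestronglyMeasurable_fun_sum
    intro j _
    exact ((translate_memℒp p g hg (lam j)).1).const_mul _
  have hDm : ∀ j : Fin n, AEStronglyMeasurable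
      (fun x => a j * (g (x - c) - g (x - lam j))) volume := by
    intro j
    exact (((translate_memℒp p g hg c).1).sub ((translate_memℒp p g hg (lam j)).1)).const_mul _
  -- bound on D
  have hDj : ∀ j : Fin n, eLpNorm (fun x => a j * (g (x - c) - g (x - lam j))) p volume
      ≤ ENNReal.ofReal (a j) * (1/2 : ℝ≥0∞) := by
    intro j
    have hsmul : eLpNorm (fun x => a j * (g (x - c) - g (x - lam j))) p volume
        = ‖a j‖ₑ * eLpNorm (fun x => g (x - c) - g (x - lam j)) p volume := by
      simpa [Pi.smul_def, smul_eq_mul] using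
        eLpNorm_const_smul (a j) (fun x => g (x - c) - g (x - lam j)) p volume
    rw [hsmul]
    have hdist : |c - lam j| ≤ δ := by
      have h1 := (hlam j).1
      have h2 := (hlam j).2
      rw [abs_le]
      constructor <;> nlinarith
    have := hδg c (lam j) hdist
    rw [Real.enorm_eq_ofReal (ha j)]
    exact mul_le_mul_right this _
  have hDle : eLpNorm D p volume ≤ ENNReal.ofReal A * (1/2 : ℝ≥0∞) := by
    have hsum : eLpNorm D p volume ≤
        ∑ j, eLpNorm (fun x => a j * (g (x - c) - g (x - lam j))) p volume := by
      have := eLpNorm_sum_le (μ := (volume : Measure ℝ))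
        (f := fun j : Fin n => fun x => a j * (g (x - c) - g (x - lam j)))
        (s := Finset.univ) (fun j _ => hDm j) hp
      convert this using 2
      ext x
      simp [hD, Finset.sum_apply]
    refine hsum.trans ?_
    calc ∑ j, eLpNorm (fun x => a j * (g (x - c) - g (x - lam j))) p volume
        ≤ ∑ j, ENNReal.ofReal (a j) * (1/2 : ℝ≥0∞) :=
          Finset.sum_le_sum fun j _ => hDj j
      _ = ENNReal.ofReal A * (1/2 : ℝ≥0∞) := by
          rw [← Finset.sum_mul, hA, ENNReal.ofReal_sum_of_nonneg (fun j _ => ha j)]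
  -- key decomposition: A • T_c g = F + D
  have hdecomp : (fun x => A * g (x - c)) = fun x => F x + D x := by
    ext x
    simp only [hF, hD]
    rw [← Finset.sum_add_distrib]
    rw [hA, Finset.sum_mul]
    congr 1
    ext j
    ring
  have hAc : eLpNorm (fun x => A * g (x - c)) p volume = ENNReal.ofReal A := by
    have hsmul : eLpNorm (fun x => A * g (x - c)) p volume
        = ‖A‖ₑ * eLpNorm (fun x => g (x - c)) p volume := by
      simpa [Pi.smul_def, smul_eq_mul] using eLpNorm_const_smul A (fun x => g (x - c)) p volume
    rw [hsmul, translate_eLpNorm p g hg c, hnorm, mul_one, Real.enorm_eq_ofReal hA0]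
  -- triangle inequality
  have htri : ENNReal.ofReal A ≤ eLpNorm F p volume + eLpNorm D p volume := by
    rw [← hAc, hdecomp]
    have hDm' : AEStronglyMeasurable D volume := by
      apply Finset.aestronglyMeasurable_fun_sum
      intro j _
      exact hDm j
    exact eLpNorm_add_le hFm hDm' hp
  have hkey : ENNReal.ofReal A ≤ eLpNorm F p volume + ENNReal.ofReal A * (1/2 : ℝ≥0∞) :=
    htri.trans (add_le_add_right hDle _)
  have hfin : ENNReal.ofReal A * (1/2 : ℝ≥0∞) ≠ ∞ := by
    apply ENNReal.mul_ne_top ENNReal.ofReal_ne_top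
    simp
  have hsub : ENNReal.ofReal A - ENNReal.ofReal A * (1/2 : ℝ≥0∞) ≤ eLpNorm F p volume :=
    tsub_le_iff_right.mpr hkey
  have hhalf : (1/2 : ℝ≥0∞) = ENNReal.ofReal (1/2 : ℝ) := by
    rw [ENNReal.ofReal_div_of_pos (by norm_num)]
    norm_num
  have heq : ENNReal.ofReal A - ENNReal.ofReal A * (1/2 : ℝ≥0∞)
      = ENNReal.ofReal ((1/2) * A) := by
    rw [hhalf, ← ENNReal.ofReal_mul hA0, ← ENNReal.ofReal_sub _ (by positivity)]
    ring_nf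
  rw [heq] at hsub
  exact hsub
end

section
/- Let $1 \le p \le 2$ and let $\{(T_{\lambda_j} g, g_j^*)\}_{j=1}^\infty$ be a $K$-unconditional Schauder frame in $L^p(\mathbb{R})$ with $\|g\|_p = 1$, where $\lambda_j \in \mathbb{R}$. Choose $\delta > 0$ such that $\|T_a g - T_b g\|_p \le 1/2$ whenever $|a-b| \le \delta$, and set $A_k = \{j : \lambda_j \in [k\delta, (k+1)\delta)\}$. Then for every $f \in L^p(\mathbb{R})$ and every $k \in \mathbb{Z}$, $\sum_{j \in A_k} |g_j^*(f)| \le 2K \|f\|_p$. -/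
set_option maxHeartbeats 1000000


open MeasureTheory
open scoped ENNReal

lemma eLpNorm_translate_aux (g : ℝ → ℝ) (p : ℝ≥0∞) (hp0 : p ≠ 0) (hptop : p ≠ ∞) (a : ℝ) :
    eLpNorm (fun x => g (x - a)) p (volume : Measure ℝ) = eLpNorm g p volume := by
  rw [eLpNorm_eq_lintegral_rpow_enorm_toReal hp0 hptop, eLpNorm_eq_lintegral_rpow_enorm_toReal hp0 hptop]
  congr 1
  exact lintegral_sub_right_eq_self (fun x => (‖g x‖ₑ : ℝ≥0∞) ^ p.toReal) a

/-- `ℓ¹`-estimate for blocks of coefficients. If `{(T_{λ_j} g, g_j^*)}` is a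
`K`-unconditional Schauder frame in `L^p(ℝ)`, `1 ≤ p ≤ 2`, with `‖g‖_p = 1`, and `δ > 0`
is such that `‖T_a g - T_b g‖_p ≤ 1/2` for `|a - b| ≤ δ`, then for every `f` and every
`k ∈ ℤ`, `∑_{j ∈ A_k} |g_j^*(f)| ≤ 2K‖f‖_p` where `A_k = {j : λ_j ∈ [kδ, (k+1)δ)}`. -/
theorem block_l1_estimate
    (p : ℝ≥0∞) [Fact (1 ≤ p)] (hp2 : p ≤ 2)
    (g : ℝ → ℝ) (lam : ℕ → ℝ)
    (hT : ∀ j, MemLp (fun x => g (x - lam j)) p (volume : Measure ℝ))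
    (hgnorm : eLpNorm g p volume = 1)
    (gs : ℕ → (Lp ℝ p (volume : Measure ℝ) →L[ℝ] ℝ))
    (K : ℝ)
    (hframe : ∀ f : Lp ℝ p (volume : Measure ℝ),
      HasSum (fun j => gs j f • ((hT j).toLp _)) f)
    (hK : ∀ (f : Lp ℝ p (volume : Measure ℝ)) (θ : ℕ → ℝ), (∀ j, |θ j| ≤ 1) →
      ∃ s, HasSum (fun j => (θ j * gs j f) • ((hT j).toLp _)) s ∧ ‖s‖ ≤ K * ‖f‖)
    (δ : ℝ) (hδ : 0 < δ)
    (hδg : ∀ a b : ℝ, |a - b| ≤ δ →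
      eLpNorm (fun x => g (x - a) - g (x - b)) p volume ≤ 1/2)
    (f : Lp ℝ p (volume : Measure ℝ)) (k : ℤ) :
    Summable (fun j : {j : ℕ // lam j ∈ Set.Ico ((k : ℝ) * δ) (((k : ℝ) + 1) * δ)} =>
        |gs j f|) ∧
      ∑' j : {j : ℕ // lam j ∈ Set.Ico ((k : ℝ) * δ) (((k : ℝ) + 1) * δ)}, |gs j f| ≤
        2 * K * ‖f‖ := by
  have hp1 : 1 ≤ p := Fact.out
  have hp0 : p ≠ 0 := by
    intro h; rw [h] at hp1; exact (not_le.mpr (by norm_num : (0:ℝ≥0∞) < 1)) hp1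
  have hptop : p ≠ ∞ := (lt_of_le_of_lt hp2 (by norm_num : (2:ℝ≥0∞) < ∞)).ne
  -- K * ‖f‖ is nonnegative
  have hK0 : 0 ≤ K * ‖f‖ := by
    obtain ⟨s, hs, hns⟩ := hK f 0 (by intro j; simp)
    simp only [Pi.zero_apply, zero_mul, zero_smul] at hs
    have : s = 0 := (hasSum_zero.unique hs).symm
    rw [this] at hns; simpa using hns
  -- key finite-sum bound
  have key : ∀ F : Finset {j : ℕ // lam j ∈ Set.Ico ((k : ℝ) * δ) (((k : ℝ) + 1) * δ)},
      ∑ j ∈ F, |gs (j : ℕ) f| ≤ 2 * K * ‖f‖ := by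
    intro F
    rcases F.eq_empty_or_nonempty with hF | ⟨j₀, hj₀⟩
    · rw [hF]; simp; linarith
    set F' : Finset ℕ := F.image Subtype.val with hF'
    have hmem : ∀ j ∈ F', lam j ∈ Set.Ico ((k : ℝ) * δ) (((k : ℝ) + 1) * δ) := by
      intro j hj
      obtain ⟨a, _, rfl⟩ := Finset.mem_image.mp hj
      exact a.property
    have hsum_eq : ∑ j ∈ F', |gs j f| = ∑ j ∈ F, |gs (j : ℕ) f| :=
      Finset.sum_image (fun a _ b _ h => Subtype.ext h)
    set θ : ℕ → ℝ := fun j => if j ∈ F' then (if gs j f < 0 then (-1:ℝ) else 1) else 0 with hθdef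
    have hθ : ∀ j, |θ j| ≤ 1 := by
      intro j; simp only [hθdef]; split_ifs <;> simp
    obtain ⟨s, hs, hns⟩ := hK f θ hθ
    have hsupp : ∀ j ∉ F', (θ j * gs j f) • ((hT j).toLp _) = 0 := by
      intro j hj; simp [hθdef, hj]
    have hval : ∀ j ∈ F', θ j * gs j f = |gs j f| := by
      intro j hj
      simp only [hθdef, if_pos hj]
      split_ifs with h
      · rw [abs_of_neg h]; ring
      · rw [abs_of_nonneg (not_lt.mp h), one_mul]
    have hs2 : s = ∑ j ∈ F', |gs j f| • ((hT j).toLp _) := by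
      have := (hasSum_sum_of_ne_finset_zero hsupp).unique hs
      rw [← this]
      exact Finset.sum_congr rfl fun j hj => by rw [hval j hj]
    -- the reference translate
    set h₀ : Lp ℝ p (volume : Measure ℝ) := (hT (j₀ : ℕ)).toLp _ with hh₀
    have hnorm0 : ‖h₀‖ = 1 := by
      rw [hh₀, Lp.norm_toLp, eLpNorm_translate_aux g p hp0 hptop, hgnorm, ENNReal.toReal_one]
    have hdist : ∀ j ∈ F', ‖h₀ - (hT j).toLp _‖ ≤ 1 / 2 := by
      intro j hj
      rw [hh₀, ← MemLp.toLp_sub, Lp.norm_toLp]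
      have habs : |lam (j₀ : ℕ) - lam j| ≤ δ := by
        have h1 := j₀.property
        have h2 := hmem j hj
        simp only [Set.mem_Ico] at h1 h2
        rw [abs_sub_le_iff]
        constructor <;> nlinarith [h1.1, h1.2, h2.1, h2.2]
      have := hδg (lam (j₀ : ℕ)) (lam j) habs
      calc (eLpNorm (fun x => g (x - lam (j₀ : ℕ)) - g (x - lam j)) p volume).toReal
          ≤ ((1:ℝ≥0∞)/2).toReal := ENNReal.toReal_mono (by norm_num) this
        _ = 1 / 2 := by simp
    set S : ℝ := ∑ j ∈ F', |gs j f| with hS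
    have hS0 : 0 ≤ S := Finset.sum_nonneg fun j _ => abs_nonneg _
    have hsplit : S • h₀ = s + ∑ j ∈ F', |gs j f| • (h₀ - (hT j).toLp _) := by
      rw [hs2, hS, Finset.sum_smul, ← Finset.sum_add_distrib]
      refine Finset.sum_congr rfl fun j hj => ?_
      rw [smul_sub]; abel
    have hSval : S = ‖S • h₀‖ := by
      rw [norm_smul, hnorm0, mul_one, Real.norm_eq_abs, abs_of_nonneg hS0]
    have hbound : S ≤ K * ‖f‖ + S / 2 := by
      calc S = ‖S • h₀‖ := hSval
        _ = ‖s + ∑ j ∈ F', |gs j f| • (h₀ - (hT j).toLp _)‖ := by rw [hsplit]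
        _ ≤ ‖s‖ + ‖∑ j ∈ F', |gs j f| • (h₀ - (hT j).toLp _)‖ := norm_add_le _ _
        _ ≤ K * ‖f‖ + ∑ j ∈ F', ‖|gs j f| • (h₀ - (hT j).toLp _)‖ :=
            add_le_add hns (norm_sum_le _ _)
        _ ≤ K * ‖f‖ + ∑ j ∈ F', |gs j f| * (1 / 2) := by
            refine add_le_add_right (Finset.sum_le_sum fun j hj => ?_) _
            rw [norm_smul, Real.norm_eq_abs, abs_abs]
            exact mul_le_mul_of_nonneg_left (hdist j hj) (abs_nonneg _)
        _ = K * ‖f‖ + S / 2 := by rw [← Finset.sum_mul, ← hS]; ring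
    linarith
  have hsummable : Summable
      (fun j : {j : ℕ // lam j ∈ Set.Ico ((k : ℝ) * δ) (((k : ℝ) + 1) * δ)} => |gs j f|) :=
    summable_of_sum_le (fun j => abs_nonneg _) key
  exact ⟨hsummable, hsummable.tsum_le_of_sum_le key⟩
end

section
/- Let $1 \le p \le 2$ and let $\{(T_{\lambda_j} g, g_j^*)\}_{j=1}^\infty$ be a $K$-unconditional Schauder frame in $L^p(\mathbb{R})$ with $\|g\|_p = 1$. With $\delta$ chosen so that $\|T_a g - T_b g\|_p \le 1/2$ for $|a-b| \le \delta$, and $A_k = \{j : \lambda_j \in [k\delta, (k+1)\delta)\}$, one has for every $f \in L^p(\mathbb{R})$ the mixed $(\ell^1, \ell^2)$-estimate $\left[\sum_{k \in \mathbb{Z}} \left(\sum_{j \in A_k} |g_j^*(f)|\right)^2\right]^{1/2} \le 2 K C_p \|f\|_p$, where $C_p$ is the cotype-2 constant of $L^p$. -/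
open MeasureTheory
open scoped ENNReal

private theorem sign_mul_self' (x : ℝ) : Real.sign x * x = |x| := by
  rcases lt_trichotomy x 0 with h | h | h
  · rw [Real.sign_of_neg h, abs_of_neg h]; ring
  · simp [h]
  · rw [Real.sign_of_pos h, abs_of_pos h]; ring

private theorem abs_sign_le_one' (x : ℝ) : |Real.sign x| ≤ 1 := by
  rcases lt_trichotomy x 0 with h | h | h
  · rw [Real.sign_of_neg h]; norm_num
  · simp [h]
  · rw [Real.sign_of_pos h]; norm_num

private theorem hasSum_finsetSum' {ι β α : Type*} [AddCommMonoid α] [TopologicalSpace α]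
    [ContinuousAdd α] (s : Finset β) (f : β → ι → α) (a : β → α)
    (h : ∀ b ∈ s, HasSum (f b) (a b)) :
    HasSum (fun i => ∑ b ∈ s, f b i) (∑ b ∈ s, a b) := by
  classical
  induction s using Finset.induction_on with
  | empty => simpa using hasSum_zero
  | @insert c t hb ih =>
    simp only [Finset.sum_insert hb]
    exact (h c (Finset.mem_insert_self c t)).add
      (ih fun b hbt => h b (Finset.mem_insert_of_mem hbt))

set_option maxHeartbeats 1000000 in
set_option synthInstance.maxHeartbeats 400000 in
/-- the mixed `(ℓ¹, ℓ²)`-estimate. If `{(T_{λ_j} g, g_j^*)}` is a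
`K`-unconditional Schauder frame in `L^p(ℝ)`, `1 ≤ p ≤ 2`, with `‖g‖_p = 1`, `δ` such
that `‖T_a g - T_b g‖_p ≤ 1/2` for `|a-b| ≤ δ`, and `C_p` a cotype-2 constant of `L^p`,
then `[∑_k (∑_{j ∈ A_k} |g_j^*(f)|)²]^{1/2} ≤ 2 K C_p ‖f‖_p`. -/
theorem mixed_l1_l2_estimate
    (p : ℝ≥0∞) [Fact (1 ≤ p)] (hp2 : p ≤ 2)
    (g : ℝ → ℝ) (lam : ℕ → ℝ)
    (hT : ∀ j, MemLp (fun x => g (x - lam j)) p (volume : Measure ℝ))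
    (hgnorm : eLpNorm g p volume = 1)
    (gs : ℕ → (Lp ℝ p (volume : Measure ℝ) →L[ℝ] ℝ))
    (K : ℝ)
    (hframe : ∀ f : Lp ℝ p (volume : Measure ℝ),
      HasSum (fun j => gs j f • ((hT j).toLp _)) f)
    (hK : ∀ (f : Lp ℝ p (volume : Measure ℝ)) (θ : ℕ → ℝ), (∀ j, |θ j| ≤ 1) →
      ∃ s, HasSum (fun j => (θ j * gs j f) • ((hT j).toLp _)) s ∧ ‖s‖ ≤ K * ‖f‖)
    (δ : ℝ) (hδ : 0 < δ)
    (hδg : ∀ a b : ℝ, |a - b| ≤ δ →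
      eLpNorm (fun x => g (x - a) - g (x - b)) p volume ≤ 1/2)
    (C : ℝ)
    (hC : ∀ (N : ℕ) (v : Fin N → Lp ℝ p (volume : Measure ℝ)),
      (∑ j, ‖v j‖ ^ 2) ^ (1/2 : ℝ) ≤
        C * ∫ t in Set.Ioo (0:ℝ) 1, ‖∑ j : Fin N, rademacher ((j : ℕ) + 1) t • v j‖)
    (f : Lp ℝ p (volume : Measure ℝ)) :
    (∀ k : ℤ, Summable (fun j : {j : ℕ //
        lam j ∈ Set.Ico ((k : ℝ) * δ) (((k : ℝ) + 1) * δ)} => |gs j f|)) ∧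
    Summable (fun k : ℤ =>
      (∑' j : {j : ℕ // lam j ∈ Set.Ico ((k : ℝ) * δ) (((k : ℝ) + 1) * δ)},
        |gs j f|) ^ 2) ∧
    (∑' k : ℤ, (∑' j : {j : ℕ // lam j ∈ Set.Ico ((k : ℝ) * δ) (((k : ℝ) + 1) * δ)},
        |gs j f|) ^ 2) ^ (1/2 : ℝ) ≤ 2 * K * C * ‖f‖ := by
  classical
  rcases eq_or_ne f 0 with rfl | hf0
  · refine ⟨fun k => by simpa using (summable_zero : Summable (fun _ :
      {j : ℕ // lam j ∈ Set.Ico ((k : ℝ) * δ) (((k : ℝ) + 1) * δ)} => (0:ℝ))), ?_, ?_⟩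
    · simpa using (summable_zero : Summable (fun _ : ℤ => (0:ℝ)))
    · simp [Real.zero_rpow]
  -- notation
  set e : ℕ → Lp ℝ p (volume : Measure ℝ) := fun j => (hT j).toLp _ with he
  -- basic norm facts
  have hgm : AEStronglyMeasurable g (volume : Measure ℝ) := by
    have := (hT 0).aestronglyMeasurable.comp_measurePreserving
      (measurePreserving_add_right (volume : Measure ℝ) (lam 0))
    simpa [Function.comp_def] using this
  have hnorm_e : ∀ j, ‖e j‖ = 1 := by
    intro j
    rw [he, Lp.norm_toLp]
    have h1 : eLpNorm (fun x => g (x - lam j)) p volume = eLpNorm g p volume := by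
      have := eLpNorm_comp_measurePreserving (p := p) hgm
        (measurePreserving_sub_right (volume : Measure ℝ) (lam j))
      simpa [Function.comp_def] using this
    rw [h1, hgnorm]; simp
  have hdiff : ∀ i j : ℕ, |lam i - lam j| ≤ δ → ‖e i - e j‖ ≤ 1/2 := by
    intro i j hij
    rw [he]
    rw [← MemLp.toLp_sub]
    rw [Lp.norm_toLp]
    calc (eLpNorm (fun x => g (x - lam i) - g (x - lam j)) p volume).toReal
        ≤ ((1:ℝ≥0∞)/2).toReal := ENNReal.toReal_mono (by norm_num) (hδg _ _ hij)
      _ = 1/2 := by norm_num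
  -- disjointness of blocks
  have hdisj : ∀ (k k' : ℤ) (j : ℕ),
      lam j ∈ Set.Ico ((k : ℝ) * δ) (((k : ℝ) + 1) * δ) →
      lam j ∈ Set.Ico ((k' : ℝ) * δ) (((k' : ℝ) + 1) * δ) → k = k' := by
    intro k k' j ⟨h1, h2⟩ ⟨h3, h4⟩
    by_contra hne
    rcases lt_or_gt_of_ne hne with h | h
    · have hk : ((k : ℝ) + 1) ≤ (k' : ℝ) := by exact_mod_cast Int.add_one_le_of_lt h
      have := mul_le_mul_of_nonneg_right hk hδ.le
      linarith
    · have hk : ((k' : ℝ) + 1) ≤ (k : ℝ) := by exact_mod_cast Int.add_one_le_of_lt h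
      have := mul_le_mul_of_nonneg_right hk hδ.le
      linarith
  -- the finite block lower estimate
  have hblock : ∀ (k : ℤ) (F : Finset ℕ),
      (∀ j ∈ F, lam j ∈ Set.Ico ((k : ℝ) * δ) (((k : ℝ) + 1) * δ)) →
      ∑ j ∈ F, |gs j f| ≤ 2 * ‖∑ j ∈ F, |gs j f| • e j‖ := by
    intro k F hF
    rcases F.eq_empty_or_nonempty with rfl | ⟨j₀, hj₀⟩
    · simp
    have hnn : (0:ℝ) ≤ ∑ j ∈ F, |gs j f| := Finset.sum_nonneg fun j _ => abs_nonneg _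
    have key : (∑ j ∈ F, |gs j f|) • e j₀ =
        (∑ j ∈ F, |gs j f| • e j) - ∑ j ∈ F, |gs j f| • (e j - e j₀) := by
      rw [Finset.sum_smul, ← Finset.sum_sub_distrib]
      exact Finset.sum_congr rfl fun j _ => by rw [← smul_sub]; congr 1; abel
    have h1 : ∑ j ∈ F, |gs j f| = ‖(∑ j ∈ F, |gs j f|) • e j₀‖ := by
      rw [norm_smul, hnorm_e, mul_one, Real.norm_eq_abs, abs_of_nonneg hnn]
    have h2 : ‖∑ j ∈ F, |gs j f| • (e j - e j₀)‖ ≤ (1/2) * ∑ j ∈ F, |gs j f| := by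
      calc ‖∑ j ∈ F, |gs j f| • (e j - e j₀)‖
          ≤ ∑ j ∈ F, ‖|gs j f| • (e j - e j₀)‖ := norm_sum_le _ _
        _ ≤ ∑ j ∈ F, |gs j f| * (1/2) := by
            refine Finset.sum_le_sum fun j hj => ?_
            rw [norm_smul, Real.norm_eq_abs, abs_abs]
            refine mul_le_mul_of_nonneg_left ?_ (abs_nonneg _)
            refine hdiff j j₀ ?_
            obtain ⟨ha1, ha2⟩ := hF j hj
            obtain ⟨hb1, hb2⟩ := hF j₀ hj₀
            have hδe : ((k : ℝ) + 1) * δ = (k : ℝ) * δ + δ := by ring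
            rw [abs_le]; constructor <;> linarith [hδe]
        _ = (1/2) * ∑ j ∈ F, |gs j f| := by rw [← Finset.sum_mul, mul_comm]
    have h3 : ‖(∑ j ∈ F, |gs j f|) • e j₀‖ ≤
        ‖∑ j ∈ F, |gs j f| • e j‖ + ‖∑ j ∈ F, |gs j f| • (e j - e j₀)‖ := by
      rw [key]; exact norm_sub_le _ _
    linarith
  -- finite unconditionality bound
  have hfin : ∀ F : Finset ℕ, ‖∑ j ∈ F, |gs j f| • e j‖ ≤ K * ‖f‖ := by
    intro F
    obtain ⟨s, hs, hsn⟩ := hK f (fun j => if j ∈ F then Real.sign (gs j f) else 0)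
      (fun j => by by_cases h : j ∈ F <;> simp [h, abs_sign_le_one'])
    have hfun : (fun j => ((if j ∈ F then Real.sign (gs j f) else 0) * gs j f) • ((hT j).toLp _))
        = fun j => if j ∈ F then |gs j f| • e j else 0 := by
      funext j; split_ifs with h
      · rw [sign_mul_self']
      · rw [zero_mul, zero_smul]
    rw [hfun] at hs
    have htar : HasSum (fun j => if j ∈ F then |gs j f| • e j else 0)
        (∑ j ∈ F, |gs j f| • e j) := by
      have h0 := hasSum_sum_of_ne_finset_zero (s := F) (L := SummationFilter.unconditional ℕ)
        (f := fun j => if j ∈ F then |gs j f| • e j else 0)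
        (fun j hj => by simp [hj])
      have : ∑ j ∈ F, (if j ∈ F then |gs j f| • e j else 0) = ∑ j ∈ F, |gs j f| • e j :=
        Finset.sum_congr rfl fun j hj => by simp [hj]
      rwa [this] at h0
    rwa [hs.unique htar] at hsn
  -- block sums
  have hBex : ∀ k : ℤ, ∃ Bk : Lp ℝ p (volume : Measure ℝ),
      HasSum (fun j => if lam j ∈ Set.Ico ((k : ℝ) * δ) (((k : ℝ) + 1) * δ)
        then |gs j f| • e j else 0) Bk := by
    intro k
    obtain ⟨s, hs, -⟩ := hK f
      (fun j => if lam j ∈ Set.Ico ((k : ℝ) * δ) (((k : ℝ) + 1) * δ)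
        then Real.sign (gs j f) else 0)
      (fun j => by by_cases h : lam j ∈ Set.Ico ((k : ℝ) * δ) (((k : ℝ) + 1) * δ) <;>
        simp [h, abs_sign_le_one'])
    refine ⟨s, ?_⟩
    have hfun : (fun j => ((if lam j ∈ Set.Ico ((k : ℝ) * δ) (((k : ℝ) + 1) * δ)
        then Real.sign (gs j f) else 0) * gs j f) • ((hT j).toLp _))
        = fun j => if lam j ∈ Set.Ico ((k : ℝ) * δ) (((k : ℝ) + 1) * δ)
          then |gs j f| • e j else 0 := by
      funext j; split_ifs with h
      · rw [sign_mul_self']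
      · rw [zero_mul, zero_smul]
    rwa [hfun] at hs
  choose B hB using hBex
  -- summability of each block (part 1)
  have hsummable : ∀ k : ℤ, Summable (fun j : {j : ℕ //
      lam j ∈ Set.Ico ((k : ℝ) * δ) (((k : ℝ) + 1) * δ)} => |gs j f|) := by
    intro k
    have hind : Summable (Set.indicator
        {j : ℕ | lam j ∈ Set.Ico ((k : ℝ) * δ) (((k : ℝ) + 1) * δ)}
        (fun j => |gs j f|)) := by
      refine summable_of_sum_le (c := 2 * (K * ‖f‖))
        (fun j => Set.indicator_nonneg (fun _ _ => abs_nonneg _) j) ?_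
      intro F
      have heq : ∑ j ∈ F, Set.indicator
          {j : ℕ | lam j ∈ Set.Ico ((k : ℝ) * δ) (((k : ℝ) + 1) * δ)}
          (fun j => |gs j f|) j
          = ∑ j ∈ F.filter (fun j =>
            lam j ∈ Set.Ico ((k : ℝ) * δ) (((k : ℝ) + 1) * δ)), |gs j f| := by
        rw [Finset.sum_filter]
        exact Finset.sum_congr rfl fun j _ => by
          simp [Set.indicator_apply, Set.mem_setOf_eq]
      rw [heq]
      have hb := hblock k (F.filter (fun j =>
          lam j ∈ Set.Ico ((k : ℝ) * δ) (((k : ℝ) + 1) * δ)))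
        (fun j hj => (Finset.mem_filter.mp hj).2)
      have hf2 := hfin (F.filter (fun j =>
        lam j ∈ Set.Ico ((k : ℝ) * δ) (((k : ℝ) + 1) * δ)))
      linarith
    exact summable_subtype_iff_indicator.mpr hind
  -- K * ‖f‖ is nonnegative
  have hKf : 0 ≤ K * ‖f‖ := by
    obtain ⟨s, hs, hsn⟩ := hK f (fun _ => 0) (fun j => by norm_num)
    have hz : HasSum (fun j : ℕ => ((0:ℝ) * gs j f) • ((hT j).toLp _)) 0 := by
      simpa using (hasSum_zero : HasSum (fun _ : ℕ => (0 : Lp ℝ p (volume : Measure ℝ))) 0)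
    rw [hs.unique hz] at hsn
    simpa using hsn
  -- C is positive
  have hCpos : 0 < C := by
    have h1 := hC 1 (fun _ : Fin 1 => f)
    simp only [Fin.sum_univ_one] at h1
    have hL : (‖f‖ ^ 2 : ℝ) ^ (1/2 : ℝ) = ‖f‖ := by
      rw [← Real.rpow_natCast ‖f‖ 2, ← Real.rpow_mul (norm_nonneg f)]; norm_num
    rw [hL] at h1
    have h2 := lt_of_lt_of_le (norm_pos_iff.mpr hf0) h1
    rcases mul_pos_iff.mp h2 with ⟨h3, _⟩ | ⟨_, h4⟩
    · exact h3
    · exact absurd (integral_nonneg fun t => norm_nonneg _) (not_le.mpr h4)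
  -- block sums as sums over the subtypes
  have hBsub : ∀ k : ℤ, HasSum (fun j : {j : ℕ //
      lam j ∈ Set.Ico ((k : ℝ) * δ) (((k : ℝ) + 1) * δ)} => |gs j f| • e (j : ℕ)) (B k) := by
    intro k
    have hfun : Set.indicator {j : ℕ | lam j ∈ Set.Ico ((k : ℝ) * δ) (((k : ℝ) + 1) * δ)}
        (fun j => |gs j f| • e j) = fun j =>
          if lam j ∈ Set.Ico ((k : ℝ) * δ) (((k : ℝ) + 1) * δ) then |gs j f| • e j else 0 := by
      funext j; simp [Set.indicator_apply, Set.mem_setOf_eq]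
    have h0 : HasSum ((fun j : ℕ => |gs j f| • e j) ∘ (Subtype.val :
        {j : ℕ | lam j ∈ Set.Ico ((k : ℝ) * δ) (((k : ℝ) + 1) * δ)} → ℕ)) (B k) := by
      rw [hasSum_subtype_iff_indicator, hfun]; exact hB k
    exact h0
  -- the block tsum is dominated by the norm of the block sum
  have hSle : ∀ k : ℤ, (∑' j : {j : ℕ //
      lam j ∈ Set.Ico ((k : ℝ) * δ) (((k : ℝ) + 1) * δ)}, |gs j f|) ≤ 2 * ‖B k‖ := by
    intro k
    refine le_of_tendsto_of_tendsto' ((hsummable k).hasSum)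
      (Filter.Tendsto.const_mul 2 (Filter.Tendsto.norm (hBsub k))) ?_
    intro G
    have hinj : ∀ x ∈ G, ∀ y ∈ G, (x : ℕ) = (y : ℕ) → x = y := fun x _ y _ h => Subtype.ext h
    have e1 := Finset.sum_image (f := fun j : ℕ => |gs j f|) (g := Subtype.val) hinj
    have e2 := Finset.sum_image (f := fun j : ℕ => |gs j f| • e j) (g := Subtype.val) hinj
    have hb := hblock k (G.image Subtype.val)
      (fun j hj => by obtain ⟨x, _, rfl⟩ := Finset.mem_image.mp hj; exact x.2)
    rw [e1, e2] at hb
    exact hb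
  -- the main finite estimate
  have hmain : ∀ FK : Finset ℤ, ∑ k ∈ FK, (∑' j : {j : ℕ //
      lam j ∈ Set.Ico ((k : ℝ) * δ) (((k : ℝ) + 1) * δ)}, |gs j f|) ^ 2
      ≤ (2 * K * C * ‖f‖) ^ 2 := by
    intro FK
    set σ := FK.equivFin.symm with hσ
    set κ : Fin FK.card → ℤ := fun i => ((σ i : {x // x ∈ FK}) : ℤ) with hκ
    have hκinj : Function.Injective κ := by
      intro i i' hii
      exact σ.injective (Subtype.ext hii)
    -- pointwise randomized bound
    have hpt : ∀ t : ℝ, ‖∑ i : Fin FK.card, rademacher ((i : ℕ) + 1) t • B (κ i)‖ ≤ K * ‖f‖ := by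
      intro t
      have hΘ1 : ∀ j, |(∑ i : Fin FK.card,
          if lam j ∈ Set.Ico ((κ i : ℝ) * δ) (((κ i : ℝ) + 1) * δ)
          then rademacher ((i : ℕ) + 1) t else 0) * Real.sign (gs j f)| ≤ 1 := by
        intro j
        rw [abs_mul]
        have hsum : |∑ i : Fin FK.card,
            if lam j ∈ Set.Ico ((κ i : ℝ) * δ) (((κ i : ℝ) + 1) * δ)
            then rademacher ((i : ℕ) + 1) t else 0| ≤ 1 := by
          rw [← Finset.sum_filter]
          rcases (Finset.univ.filter (fun i : Fin FK.card =>
            lam j ∈ Set.Ico ((κ i : ℝ) * δ) (((κ i : ℝ) + 1) * δ))).eq_empty_or_nonempty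
            with hTe | hTn
          · rw [hTe]; simp
          · have hcard : (Finset.univ.filter (fun i : Fin FK.card =>
                lam j ∈ Set.Ico ((κ i : ℝ) * δ) (((κ i : ℝ) + 1) * δ))).card ≤ 1 := by
              refine Finset.card_le_one.mpr ?_
              intro x hx y hy
              exact hκinj (hdisj _ _ j (Finset.mem_filter.mp hx).2 (Finset.mem_filter.mp hy).2)
            obtain ⟨i, hi⟩ := Finset.card_eq_one.mp (le_antisymm hcard hTn.card_pos)
            rw [hi, Finset.sum_singleton]
            exact abs_sign_le_one' _
        exact mul_le_one₀ hsum (abs_nonneg _) (abs_sign_le_one' _)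
      obtain ⟨s, hs, hsn⟩ := hK f (fun j => (∑ i : Fin FK.card,
          if lam j ∈ Set.Ico ((κ i : ℝ) * δ) (((κ i : ℝ) + 1) * δ)
          then rademacher ((i : ℕ) + 1) t else 0) * Real.sign (gs j f)) hΘ1
      have h1 : ∀ i ∈ (Finset.univ : Finset (Fin FK.card)), HasSum
          (fun j => rademacher ((i : ℕ) + 1) t •
            (if lam j ∈ Set.Ico ((κ i : ℝ) * δ) (((κ i : ℝ) + 1) * δ)
             then |gs j f| • e j else 0))
          (rademacher ((i : ℕ) + 1) t • B (κ i)) :=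
        fun i _ => (hB (κ i)).const_smul _
      have h2 := hasSum_finsetSum' Finset.univ _ _ h1
      have hfun : (fun j => ((∑ i : Fin FK.card,
          if lam j ∈ Set.Ico ((κ i : ℝ) * δ) (((κ i : ℝ) + 1) * δ)
          then rademacher ((i : ℕ) + 1) t else 0) * Real.sign (gs j f) * gs j f)
            • ((hT j).toLp _))
          = fun j => ∑ i : Fin FK.card, rademacher ((i : ℕ) + 1) t •
            (if lam j ∈ Set.Ico ((κ i : ℝ) * δ) (((κ i : ℝ) + 1) * δ)
             then |gs j f| • e j else 0) := by
        funext j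
        rw [mul_assoc, sign_mul_self', ← smul_smul, Finset.sum_smul]
        exact Finset.sum_congr rfl fun i _ => by
          split_ifs with h
          · rfl
          · rw [zero_smul, smul_zero]
      rw [hfun] at hs
      rw [hs.unique h2] at hsn
      exact hsn
    -- the randomized integral bound
    have hInt : (∫ t in Set.Ioo (0:ℝ) 1,
        ‖∑ i : Fin FK.card, rademacher ((i : ℕ) + 1) t • B (κ i)‖) ≤ K * ‖f‖ := by
      have hconst : IntegrableOn (fun _ : ℝ => K * ‖f‖) (Set.Ioo (0:ℝ) 1) volume := by
        apply (integrableOn_const_iff).mpr; right; rw [Real.volume_Ioo]; exact ENNReal.ofReal_lt_top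
      have hm := integral_mono_of_nonneg (μ := volume.restrict (Set.Ioo (0:ℝ) 1))
        (Filter.Eventually.of_forall fun t => norm_nonneg _) hconst
        (Filter.Eventually.of_forall fun t => hpt t)
      calc (∫ t in Set.Ioo (0:ℝ) 1,
          ‖∑ i : Fin FK.card, rademacher ((i : ℕ) + 1) t • B (κ i)‖)
          ≤ ∫ _t in Set.Ioo (0:ℝ) 1, K * ‖f‖ := hm
        _ = K * ‖f‖ := by rw [setIntegral_const, Real.volume_real_Ioo]; norm_num
    have hCK := (hC FK.card (fun i => B (κ i))).trans
      (mul_le_mul_of_nonneg_left hInt hCpos.le)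
    have hnn2 : 0 ≤ ∑ i : Fin FK.card, ‖B (κ i)‖ ^ 2 :=
      Finset.sum_nonneg fun i _ => sq_nonneg _
    have h4 : ∑ i : Fin FK.card, ‖B (κ i)‖ ^ 2 ≤ (C * (K * ‖f‖)) ^ 2 := by
      have heq : ∑ i : Fin FK.card, ‖B (κ i)‖ ^ 2
          = ((∑ i : Fin FK.card, ‖B (κ i)‖ ^ 2) ^ (1/2 : ℝ)) ^ 2 := by
        rw [← Real.rpow_natCast ((∑ i : Fin FK.card, ‖B (κ i)‖ ^ 2) ^ (1/2:ℝ)) 2,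
          ← Real.rpow_mul hnn2]
        norm_num
      rw [heq]
      exact pow_le_pow_left₀ (Real.rpow_nonneg hnn2 _) hCK 2
    have hFKsum : ∑ k ∈ FK, ‖B k‖ ^ 2 = ∑ i : Fin FK.card, ‖B (κ i)‖ ^ 2 := by
      rw [← Finset.sum_coe_sort FK (fun k => ‖B k‖ ^ 2)]
      exact (Equiv.sum_comp σ (fun x : {x // x ∈ FK} => ‖B (x : ℤ)‖ ^ 2)).symm
    have hterm : ∀ k ∈ FK, (∑' j : {j : ℕ //
        lam j ∈ Set.Ico ((k : ℝ) * δ) (((k : ℝ) + 1) * δ)}, |gs j f|) ^ 2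
        ≤ 4 * ‖B k‖ ^ 2 := by
      intro k _
      have h0 : (0:ℝ) ≤ ∑' j : {j : ℕ //
          lam j ∈ Set.Ico ((k : ℝ) * δ) (((k : ℝ) + 1) * δ)}, |gs j f| :=
        tsum_nonneg fun j => abs_nonneg _
      nlinarith [hSle k]
    calc ∑ k ∈ FK, (∑' j : {j : ℕ //
        lam j ∈ Set.Ico ((k : ℝ) * δ) (((k : ℝ) + 1) * δ)}, |gs j f|) ^ 2
        ≤ ∑ k ∈ FK, 4 * ‖B k‖ ^ 2 := Finset.sum_le_sum hterm
      _ = 4 * ∑ k ∈ FK, ‖B k‖ ^ 2 := by rw [Finset.mul_sum]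
      _ = 4 * ∑ i : Fin FK.card, ‖B (κ i)‖ ^ 2 := by rw [hFKsum]
      _ ≤ 4 * (C * (K * ‖f‖)) ^ 2 := by linarith
      _ = (2 * K * C * ‖f‖) ^ 2 := by ring
  have hsummable2 : Summable (fun k : ℤ => (∑' j : {j : ℕ //
      lam j ∈ Set.Ico ((k : ℝ) * δ) (((k : ℝ) + 1) * δ)}, |gs j f|) ^ 2) :=
    summable_of_sum_le (fun k => sq_nonneg _) hmain
  refine ⟨hsummable, hsummable2, ?_⟩
  have htsum := Summable.tsum_le_of_sum_le hsummable2 hmain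
  have hM : 0 ≤ 2 * K * C * ‖f‖ := by nlinarith [mul_nonneg hKf hCpos.le]
  calc (∑' k : ℤ, (∑' j : {j : ℕ //
      lam j ∈ Set.Ico ((k : ℝ) * δ) (((k : ℝ) + 1) * δ)}, |gs j f|) ^ 2) ^ (1/2 : ℝ)
      ≤ ((2 * K * C * ‖f‖) ^ 2) ^ (1/2 : ℝ) :=
        Real.rpow_le_rpow (tsum_nonneg fun k => sq_nonneg _) htsum (by norm_num)
    _ = 2 * K * C * ‖f‖ := by
        rw [← Real.rpow_natCast (2 * K * C * ‖f‖) 2, ← Real.rpow_mul hM]; norm_num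
end

section
/- Let $1 \le p \le 2$ and let $\{(T_{\lambda_j} g, g_j^*)\}_{j=1}^\infty$ be an unconditional Schauder frame in $L^p(\mathbb{R})$. With $\delta > 0$ such that $\|T_a g - T_b g\|_p \le 1/2$ for $|a-b| \le \delta$, and $A_k = \{j : \lambda_j \in [k\delta,(k+1)\delta)\}$, the operator $B_k : L^p(\mathbb{R}) \to L^p(\mathbb{R})$ defined by $B_k f = \sum_{j \in A_k} g_j^*(f) T_{\lambda_j} g$ is a well-defined compact linear operator, even if $A_k$ is infinite. -/
open MeasureTheory
open scoped ENNReal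

private lemma aux_bs {E F : Type*} [NormedAddCommGroup E] [NormedSpace ℝ E] [CompleteSpace E]
    [NormedAddCommGroup F] [NormedSpace ℝ F] (t : ℕ → E →L[ℝ] F)
    (h : ∀ f : E, Summable fun j => t j f) :
    ∃ C : ℝ, 0 ≤ C ∧ ∀ (u : Finset ℕ) (f : E), ‖∑ j ∈ u, t j f‖ ≤ C * ‖f‖ := by
  have hpt : ∀ f : E, ∃ Cf : ℝ, ∀ u : Finset ℕ, ‖(∑ j ∈ u, t j) f‖ ≤ Cf := by
    intro f
    obtain ⟨s, hs⟩ := h f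
    have hev : ∀ᶠ u : Finset ℕ in Filter.atTop,
        (∑ j ∈ u, t j f) ∈ Metric.ball s 1 := hs (Metric.ball_mem_nhds s one_pos)
    obtain ⟨u0, hu0⟩ := Filter.eventually_atTop.mp hev
    refine ⟨‖s‖ + 1 + ∑ j ∈ u0, ‖t j f‖, fun u => ?_⟩
    have h1 : ∑ j ∈ u ∪ u0, t j f = ∑ j ∈ u, t j f + ∑ j ∈ u0 \ u, t j f := by
      rw [← Finset.sum_union Finset.disjoint_sdiff, Finset.union_sdiff_self_eq_union]
    have h2 : ‖∑ j ∈ u ∪ u0, t j f‖ ≤ ‖s‖ + 1 := by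
      have hmem := hu0 (u ∪ u0) Finset.subset_union_right
      rw [Metric.mem_ball, dist_eq_norm] at hmem
      calc ‖∑ j ∈ u ∪ u0, t j f‖ = ‖(∑ j ∈ u ∪ u0, t j f - s) + s‖ := by
            rw [sub_add_cancel]
        _ ≤ ‖∑ j ∈ u ∪ u0, t j f - s‖ + ‖s‖ := norm_add_le _ _
        _ ≤ ‖s‖ + 1 := by linarith
    have h3 : ‖∑ j ∈ u0 \ u, t j f‖ ≤ ∑ j ∈ u0, ‖t j f‖ := by
      calc ‖∑ j ∈ u0 \ u, t j f‖ ≤ ∑ j ∈ u0 \ u, ‖t j f‖ := norm_sum_le _ _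
        _ ≤ ∑ j ∈ u0, ‖t j f‖ :=
          Finset.sum_le_sum_of_subset_of_nonneg (Finset.sdiff_subset)
            (fun _ _ _ => norm_nonneg _)
    have h4 : ∑ j ∈ u, t j f = ∑ j ∈ u ∪ u0, t j f - ∑ j ∈ u0 \ u, t j f := by
      rw [h1]; abel
    simp only [ContinuousLinearMap.coe_sum', Finset.sum_apply]
    rw [h4]
    calc ‖∑ j ∈ u ∪ u0, t j f - ∑ j ∈ u0 \ u, t j f‖
        ≤ ‖∑ j ∈ u ∪ u0, t j f‖ + ‖∑ j ∈ u0 \ u, t j f‖ := norm_sub_le _ _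
      _ ≤ ‖s‖ + 1 + ∑ j ∈ u0, ‖t j f‖ := by linarith
  obtain ⟨C', hC'⟩ := banach_steinhaus hpt
  refine ⟨max C' 0, le_max_right _ _, fun u f => ?_⟩
  calc ‖∑ j ∈ u, t j f‖ = ‖(∑ j ∈ u, t j) f‖ := by
        simp [ContinuousLinearMap.coe_sum', Finset.sum_apply]
    _ ≤ ‖∑ j ∈ u, t j‖ * ‖f‖ := ContinuousLinearMap.le_opNorm _ _
    _ ≤ max C' 0 * ‖f‖ :=
        mul_le_mul_of_nonneg_right ((hC' u).trans (le_max_left _ _)) (norm_nonneg f)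

private lemma aux_rankone_compact {E F : Type*} [NormedAddCommGroup E] [NormedSpace ℝ E]
    [NormedAddCommGroup F] [NormedSpace ℝ F] (φ : E →L[ℝ] ℝ) (h : F) :
    IsCompactOperator ⇑(φ.smulRight h) := by
  have hφ : IsCompactOperator ⇑φ := by
    refine ⟨Metric.closedBall 0 ‖φ‖, isCompact_closedBall _ _, ?_⟩
    refine Filter.mem_of_superset (Metric.ball_mem_nhds 0 one_pos) ?_
    intro f hf
    simp only [Metric.mem_ball, dist_zero_right] at hf
    simp only [Set.mem_preimage, Metric.mem_closedBall, dist_zero_right]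
    calc ‖φ f‖ ≤ ‖φ‖ * ‖f‖ := φ.le_opNorm f
      _ ≤ ‖φ‖ * 1 := mul_le_mul_of_nonneg_left hf.le (norm_nonneg φ)
      _ = ‖φ‖ := mul_one _
  have h2 := hφ.clm_comp (g := (ContinuousLinearMap.id ℝ ℝ).smulRight h)
  have h3 : (⇑((ContinuousLinearMap.id ℝ ℝ).smulRight h)) ∘ ⇑φ = ⇑(φ.smulRight h) := by
    funext f; simp
  rwa [h3] at h2

private lemma aux_partition (δ η : ℝ) (hδ : 0 < δ) (hη : 0 < η) (K : ℝ) :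
    ∃ n : ℕ, 0 < n ∧ ∃ (idx : ℝ → ℕ) (c : ℕ → ℝ),
      ∀ x ∈ Set.Ico K (K + δ), idx x < n ∧ c (idx x) ∈ Set.Icc K (K + δ) ∧
        |x - c (idx x)| < η := by
  set n : ℕ := ⌈δ/η⌉₊ with hn
  have hn0 : 0 < n := Nat.ceil_pos.mpr (by positivity)
  have hnR : (0:ℝ) < n := by exact_mod_cast hn0
  set d : ℝ := δ / n with hd
  have hd0 : 0 < d := by positivity
  have hdη : d ≤ η := by
    have h1 : δ/η ≤ (n:ℝ) := Nat.le_ceil _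
    rw [hd, div_le_iff₀ hnR]
    rw [div_le_iff₀ hη] at h1
    nlinarith
  refine ⟨n, hn0, fun x => ⌊(x - K) / d⌋₊, fun i => K + i * d, ?_⟩
  intro x hx
  obtain ⟨hx1, hx2⟩ := hx
  set a : ℝ := x - K with ha
  have ha0 : 0 ≤ a := by simp only [ha]; linarith
  have ha1 : a < δ := by simp only [ha]; linarith
  set u : ℝ := a / d with hu
  have hu0 : 0 ≤ u := by positivity
  have hun : u < n := by
    rw [hu, div_lt_iff₀ hd0, hd]
    field_simp
    nlinarith
  have hfl : ⌊u⌋₊ < n := (Nat.floor_lt hu0).mpr hun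
  have hi1 : (⌊u⌋₊ : ℝ) ≤ u := Nat.floor_le hu0
  have hi2 : u < ⌊u⌋₊ + 1 := Nat.lt_floor_add_one u
  have hud : u * d = a := by rw [hu]; field_simp
  have hl : (⌊u⌋₊ : ℝ) * d ≤ a := by
    calc (⌊u⌋₊ : ℝ) * d ≤ u * d := mul_le_mul_of_nonneg_right hi1 hd0.le
      _ = a := hud
  have hr : a < (⌊u⌋₊ : ℝ) * d + d := by
    have h5 := mul_lt_mul_of_pos_right hi2 hd0
    rw [hud] at h5; nlinarith
  have hxc : x - (K + (⌊u⌋₊ : ℝ) * d) = a - (⌊u⌋₊ : ℝ) * d := by rw [ha]; ring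
  refine ⟨hfl, ⟨by nlinarith [mul_nonneg (Nat.cast_nonneg ⌊u⌋₊) hd0.le], by nlinarith⟩, ?_⟩
  rw [hxc, abs_of_nonneg (by nlinarith)]
  nlinarith

set_option maxHeartbeats 2000000 in
set_option synthInstance.maxHeartbeats 1000000 in
/-- compactness of the block operators. If `{(T_{λ_j} g, g_j^*)}` is an
unconditional Schauder frame in `L^p(ℝ)`, `1 ≤ p ≤ 2`, and `δ > 0` satisfies
`‖T_a g - T_b g‖_p ≤ 1/2` for `|a-b| ≤ δ`, then for each `k ∈ ℤ` the operator
`B_k f = ∑_{j ∈ A_k} g_j^*(f) T_{λ_j} g` is a well-defined compact operator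
(even if `A_k` is infinite), where `A_k = {j : λ_j ∈ [kδ, (k+1)δ)}`. -/
theorem block_operator_compact
    (p : ℝ≥0∞) [Fact (1 ≤ p)] (hp2 : p ≤ 2)
    (g : ℝ → ℝ) (lam : ℕ → ℝ)
    (hT : ∀ j, MemLp (fun x => g (x - lam j)) p (volume : Measure ℝ))
    (gs : ℕ → (Lp ℝ p (volume : Measure ℝ) →L[ℝ] ℝ))
    (hframe : ∀ f : Lp ℝ p (volume : Measure ℝ),
      HasSum (fun j => gs j f • ((hT j).toLp _)) f)
    (δ : ℝ) (hδ : 0 < δ)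
    (hδg : ∀ a b : ℝ, |a - b| ≤ δ →
      eLpNorm (fun x => g (x - a) - g (x - b)) p volume ≤ 1/2)
    (k : ℤ) :
    ∃ B : Lp ℝ p (volume : Measure ℝ) →L[ℝ] Lp ℝ p (volume : Measure ℝ),
      IsCompactOperator B ∧
      ∀ f : Lp ℝ p (volume : Measure ℝ),
        HasSum (fun j : {j : ℕ // lam j ∈ Set.Ico ((k : ℝ) * δ) (((k : ℝ) + 1) * δ)} =>
          gs j f • ((hT j).toLp _)) (B f) := by
  classical
  have hptop : p ≠ ∞ := by
    intro h
    rw [h] at hp2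
    exact absurd (top_le_iff.mp hp2) (by simp)
  set e : ℕ → Lp ℝ p (volume : Measure ℝ) := fun j => (hT j).toLp _ with he
  -- `g` itself is in `Lᵖ`
  have hg : MemLp g p (volume : Measure ℝ) := by
    have h1 := (hT 0).comp_measurePreserving
      (measurePreserving_add_right (volume : Measure ℝ) (lam 0))
    have h2 : ((fun x => g (x - lam 0)) ∘ fun x => x + lam 0) = g := by
      funext x; simp
    rwa [h2] at h1
  set gLp : Lp ℝ p (volume : Measure ℝ) := hg.toLp g with hgLp
  -- the translation path
  set cm : ℝ → C(ℝ, ℝ) :=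
    fun a => (ContinuousMap.mk (fun q : ℝ × ℝ => q.2 - q.1) (by continuity)).curry a with hcm
  have hmp : ∀ a : ℝ, MeasurePreserving (cm a) (volume : Measure ℝ) (volume : Measure ℝ) :=
    fun a => measurePreserving_sub_right (volume : Measure ℝ) a
  set Φ : ℝ → Lp ℝ p (volume : Measure ℝ) :=
    fun a => Lp.compMeasurePreserving (cm a) (hmp a) gLp with hΦ
  have hΦcont : Continuous Φ :=
    Continuous.compMeasurePreservingLp continuous_const
      (ContinuousMap.continuous _) hmp hptop
  have heΦ : ∀ j, e j = Φ (lam j) := by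
    intro j
    rw [hΦ, he]
    exact (Lp.toLp_compMeasurePreserving hg (hmp (lam j))).symm
  have hΦnorm : ∀ a : ℝ, ‖Φ a‖ = ‖gLp‖ := fun a => Lp.norm_compMeasurePreserving _ _
  -- trivial case : `g = 0`
  rcases eq_or_ne (‖gLp‖) 0 with hγ0 | hγne
  · refine ⟨0, isCompactOperator_zero, fun f => ?_⟩
    have hgLp0 : gLp = 0 := norm_eq_zero.mp hγ0
    have hz : ∀ j : {j : ℕ // lam j ∈ Set.Ico ((k : ℝ) * δ) (((k : ℝ) + 1) * δ)},
        gs j f • ((hT j).toLp _) = 0 := by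
      intro j
      have h1 : ((hT (j:ℕ)).toLp fun x => g (x - lam (j:ℕ))) = e (j:ℕ) := rfl
      rw [h1, heΦ, hΦ]
      simp [hgLp0]
    simp only [ContinuousLinearMap.zero_apply]
    rw [show (fun j : {j : ℕ // lam j ∈ Set.Ico ((k : ℝ) * δ) (((k : ℝ) + 1) * δ)} =>
          gs j f • ((hT j).toLp _)) = fun _ => (0 : Lp ℝ p (volume : Measure ℝ)) from
        funext hz]
    exact hasSum_zero
  set γ : ℝ := ‖gLp‖ with hγdef
  have hγ : 0 < γ := (norm_nonneg _).lt_of_ne' hγne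
  -- Banach–Steinhaus bound
  set t : ℕ → Lp ℝ p (volume : Measure ℝ) →L[ℝ] Lp ℝ p (volume : Measure ℝ) :=
    fun j => (gs j).smulRight (e j) with ht
  have htapp : ∀ j f, t j f = gs j f • e j := fun j f => rfl
  have hsumt : ∀ f : Lp ℝ p (volume : Measure ℝ), Summable fun j => t j f :=
    fun f => (hframe f).summable
  obtain ⟨C, hC0, hC⟩ := aux_bs t hsumt
  -- scalar consequence
  have habs : ∀ (φ : Lp ℝ p (volume : Measure ℝ) →L[ℝ] ℝ), ‖φ‖ ≤ 1 →
      ∀ (f : Lp ℝ p (volume : Measure ℝ)) (u : Finset ℕ),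
      ∑ j ∈ u, |φ (gs j f • e j)| ≤ 2 * C * ‖f‖ := by
    intro φ hφ f u
    set x : ℕ → ℝ := fun j => φ (gs j f • e j) with hx
    have key : ∀ v : Finset ℕ, v ⊆ u → |∑ j ∈ v, x j| ≤ C * ‖f‖ := by
      intro v _
      have h1 : ∑ j ∈ v, x j = φ (∑ j ∈ v, gs j f • e j) := (map_sum φ _ _).symm
      rw [h1]
      calc |φ (∑ j ∈ v, gs j f • e j)| ≤ ‖φ‖ * ‖∑ j ∈ v, gs j f • e j‖ :=
            φ.le_opNorm _
        _ ≤ 1 * (C * ‖f‖) := by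
            apply mul_le_mul hφ ?_ (norm_nonneg _) zero_le_one
            have h6 := hC v f
            simpa [htapp] using h6
        _ = C * ‖f‖ := one_mul _
    have hsplit := Finset.sum_filter_add_sum_filter_not u (fun j => 0 ≤ x j)
      (fun j => |x j|)
    have h1 : ∑ j ∈ u.filter (fun j => 0 ≤ x j), |x j|
        = ∑ j ∈ u.filter (fun j => 0 ≤ x j), x j :=
      Finset.sum_congr rfl fun j hj => abs_of_nonneg (Finset.mem_filter.mp hj).2
    have h2 : ∑ j ∈ u.filter (fun j => ¬ 0 ≤ x j), |x j|
        = - ∑ j ∈ u.filter (fun j => ¬ 0 ≤ x j), x j := by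
      rw [← Finset.sum_neg_distrib]
      exact Finset.sum_congr rfl fun j hj =>
        abs_of_neg (lt_of_not_ge (Finset.mem_filter.mp hj).2)
    have k1 := key _ (Finset.filter_subset (fun j => 0 ≤ x j) u)
    have k2 := key _ (Finset.filter_subset (fun j => ¬ 0 ≤ x j) u)
    rw [← hsplit, h1, h2]
    linarith [(abs_le.mp k1).2, (abs_le.mp k2).1]
  -- block coefficient bound
  have hblock : ∀ (μc : ℝ) (f : Lp ℝ p (volume : Measure ℝ)) (u : Finset ℕ),
      (∀ j ∈ u, ‖e j - Φ μc‖ ≤ γ/2) →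
      ∑ j ∈ u, |gs j f| ≤ 4 * C / γ * ‖f‖ := by
    intro μc f u hu
    have hΦne : Φ μc ≠ 0 := by
      intro h0
      have h1 := hΦnorm μc
      rw [h0, norm_zero] at h1
      exact hγne h1.symm
    obtain ⟨φ, hφ1, hφ2⟩ := exists_dual_vector ℝ (Φ μc) (norm_ne_zero_iff.mpr hΦne)
    have hφ2' : φ (Φ μc) = γ := by rw [hφ2, hΦnorm]; norm_cast
    have hφe : ∀ j ∈ u, γ/2 ≤ |φ (e j)| := by
      intro j hj
      have h1 : φ (e j) = φ (Φ μc) + φ (e j - Φ μc) := by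
        rw [map_sub]; ring
      have h2 : |φ (e j - Φ μc)| ≤ γ/2 := by
        calc |φ (e j - Φ μc)| ≤ ‖φ‖ * ‖e j - Φ μc‖ := φ.le_opNorm _
          _ ≤ 1 * (γ/2) := by
              rw [hφ1]
              exact mul_le_mul_of_nonneg_left (hu j hj) zero_le_one
          _ = γ/2 := one_mul _
      have h4 : γ/2 ≤ φ (e j) := by
        have h3 := abs_le.mp h2
        rw [h1, hφ2']; linarith
      exact h4.trans (le_abs_self _)
    have step : ∀ j ∈ u, |gs j f| * (γ/2) ≤ |φ (gs j f • e j)| := by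
      intro j hj
      have h1 : φ (gs j f • e j) = gs j f * φ (e j) := by simp
      rw [h1, abs_mul]
      exact mul_le_mul_of_nonneg_left (hφe j hj) (abs_nonneg _)
    have h5 : (∑ j ∈ u, |gs j f|) * (γ/2) ≤ 2 * C * ‖f‖ := by
      rw [Finset.sum_mul]
      exact (Finset.sum_le_sum step).trans (habs φ hφ1.le f u)
    have hγ2 : 0 < γ/2 := by positivity
    have h6 : ∑ j ∈ u, |gs j f| ≤ 2 * C * ‖f‖ / (γ/2) := (le_div_iff₀ hγ2).mpr h5
    have h7 : 2 * C * ‖f‖ / (γ/2) = 4 * C / γ * ‖f‖ := by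
      field_simp; ring
    rwa [h7] at h6
  -- uniform continuity of the path on the compact interval
  have huc : ∀ ε : ℝ, 0 < ε → ∃ η : ℝ, 0 < η ∧
      ∀ a ∈ Set.Icc ((k:ℝ)*δ) (((k:ℝ)+1)*δ), ∀ b ∈ Set.Icc ((k:ℝ)*δ) (((k:ℝ)+1)*δ),
        |a - b| < η → ‖Φ a - Φ b‖ ≤ ε := by
    intro ε hε
    have h1 := (isCompact_Icc (a := (k:ℝ)*δ)
      (b := ((k:ℝ)+1)*δ)).uniformContinuousOn_of_continuous hΦcont.continuousOn
    rw [Metric.uniformContinuousOn_iff] at h1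
    obtain ⟨η, hη, h2⟩ := h1 ε hε
    refine ⟨η, hη, fun a ha b hb hab => ?_⟩
    have h3 := h2 a ha b hb (by rwa [Real.dist_eq])
    rw [dist_eq_norm] at h3
    exact h3.le
  have hIcc : ((k:ℝ)+1)*δ = (k:ℝ)*δ + δ := by ring
  -- combined partition fact
  have hpart : ∀ ε : ℝ, 0 < ε → ∃ n : ℕ, 0 < n ∧ ∃ (idx : ℕ → ℕ) (c : ℕ → ℝ),
      ∀ j : ℕ, lam j ∈ Set.Ico ((k:ℝ)*δ) (((k:ℝ)+1)*δ) →
        idx j < n ∧ ‖e j - Φ (c (idx j))‖ ≤ ε := by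
    intro ε hε
    obtain ⟨η, hη, hunif⟩ := huc ε hε
    obtain ⟨n, hn, idx, c, hpp⟩ := aux_partition δ η hδ hη ((k:ℝ)*δ)
    refine ⟨n, hn, fun j => idx (lam j), c, fun j hj => ?_⟩
    have hj' : lam j ∈ Set.Ico ((k:ℝ)*δ) ((k:ℝ)*δ + δ) := by rwa [hIcc] at hj
    obtain ⟨hlt, hcmem, hdist⟩ := hpp (lam j) hj'
    refine ⟨hlt, ?_⟩
    rw [heΦ]
    exact hunif (lam j) (by rw [hIcc]; exact ⟨hj'.1, hj'.2.le⟩) _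
      (by rw [hIcc]; exact hcmem) hdist
  -- ℓ¹ bound on coefficients over the block
  obtain ⟨n₀, hn₀, idx₀, c₀, hpart₀⟩ := hpart (γ/2) (by positivity)
  have hl1 : ∀ (f : Lp ℝ p (volume : Measure ℝ))
      (u : Finset {j : ℕ // lam j ∈ Set.Ico ((k : ℝ) * δ) (((k : ℝ) + 1) * δ)}),
      ∑ j ∈ u, |gs (j:ℕ) f| ≤ ((n₀ : ℝ) * (4 * C / γ)) * ‖f‖ := by
    intro f u
    have hmaps : ∀ j ∈ u, idx₀ (j:ℕ) ∈ Finset.range n₀ := fun j _ =>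
      Finset.mem_range.mpr (hpart₀ (j:ℕ) j.2).1
    rw [← Finset.sum_fiberwise_of_maps_to hmaps (fun j => |gs (j:ℕ) f|)]
    have hinner : ∀ i ∈ Finset.range n₀,
        ∑ j ∈ u.filter (fun j => idx₀ j.1 = i), |gs (j:ℕ) f| ≤ 4 * C / γ * ‖f‖ := by
      intro i _
      have hsum := Finset.sum_map (u.filter (fun j => idx₀ j.1 = i))
        (Function.Embedding.subtype _) (fun m => |gs m f|)
      simp only [Function.Embedding.coe_subtype] at hsum
      rw [← hsum]
      apply hblock (c₀ i) f
      intro m hm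
      rw [Finset.mem_map] at hm
      obtain ⟨j, hj, rfl⟩ := hm
      have hj2 := Finset.mem_filter.mp hj
      have h8 := (hpart₀ (j:ℕ) j.2).2
      rw [hj2.2] at h8
      exact h8
    refine le_trans (Finset.sum_le_card_nsmul _ _ _ hinner) ?_
    rw [Finset.card_range, nsmul_eq_mul]
    exact le_of_eq (by ring)
  set M : ℝ := (n₀ : ℝ) * (4 * C / γ) with hM
  have hM0 : 0 ≤ M := by positivity
  have hsumabs : ∀ f : Lp ℝ p (volume : Measure ℝ),
      Summable fun j : {j : ℕ // lam j ∈ Set.Ico ((k : ℝ) * δ) (((k : ℝ) + 1) * δ)} =>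
        |gs (j:ℕ) f| := fun f =>
    summable_of_sum_le (fun j => abs_nonneg _) (fun u => hl1 f u)
  have htsumabs : ∀ f : Lp ℝ p (volume : Measure ℝ),
      ∑' j : {j : ℕ // lam j ∈ Set.Ico ((k : ℝ) * δ) (((k : ℝ) + 1) * δ)}, |gs (j:ℕ) f|
        ≤ M * ‖f‖ := fun f =>
    Summable.tsum_le_of_sum_le (hsumabs f) (fun u => hl1 f u)
  -- summability of the block series
  have hsummv : ∀ f : Lp ℝ p (volume : Measure ℝ),
      Summable fun j : {j : ℕ // lam j ∈ Set.Ico ((k : ℝ) * δ) (((k : ℝ) + 1) * δ)} =>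
        gs (j:ℕ) f • e (j:ℕ) := by
    intro f
    exact (hframe f).summable.subtype {j | lam j ∈ Set.Ico ((k:ℝ)*δ) (((k:ℝ)+1)*δ)}
  -- definition of the operator
  set Lmap : Lp ℝ p (volume : Measure ℝ) →ₗ[ℝ] Lp ℝ p (volume : Measure ℝ) :=
    { toFun := fun f => ∑' j : {j : ℕ // lam j ∈ Set.Ico ((k : ℝ) * δ) (((k : ℝ) + 1) * δ)},
        gs (j:ℕ) f • e (j:ℕ)
      map_add' := by
        intro a b
        have h1 : (fun j : {j : ℕ // lam j ∈ Set.Ico ((k : ℝ) * δ) (((k : ℝ) + 1) * δ)} =>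
            gs (j:ℕ) (a + b) • e (j:ℕ))
            = fun j : {j : ℕ // lam j ∈ Set.Ico ((k : ℝ) * δ) (((k : ℝ) + 1) * δ)} =>
              gs (j:ℕ) a • e (j:ℕ) + gs (j:ℕ) b • e (j:ℕ) := by
          funext j; rw [map_add, add_smul]
        rw [h1, Summable.tsum_add (hsummv a) (hsummv b)]
      map_smul' := by
        intro r a
        have h1 : (fun j : {j : ℕ // lam j ∈ Set.Ico ((k : ℝ) * δ) (((k : ℝ) + 1) * δ)} =>
            gs (j:ℕ) (r • a) • e (j:ℕ))
            = fun j : {j : ℕ // lam j ∈ Set.Ico ((k : ℝ) * δ) (((k : ℝ) + 1) * δ)} =>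
              r • (gs (j:ℕ) a • e (j:ℕ)) := by
          funext j; rw [ContinuousLinearMap.map_smul, smul_smul]; rfl
        rw [h1, Summable.tsum_const_smul r (hsummv a)]; rfl } with hLmap
  have hLapp : ∀ f, Lmap f
      = ∑' j : {j : ℕ // lam j ∈ Set.Ico ((k : ℝ) * δ) (((k : ℝ) + 1) * δ)},
        gs (j:ℕ) f • e (j:ℕ) := fun f => rfl
  have hLbound : ∀ f, ‖Lmap f‖ ≤ C * ‖f‖ := by
    intro f
    have hs := (hsummv f).hasSum
    rw [hLapp]
    refine le_of_tendsto hs.norm (Filter.Eventually.of_forall fun u => ?_)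
    have himg := Finset.sum_map u (Function.Embedding.subtype _)
      (fun m => gs m f • e m)
    simp only [Function.Embedding.coe_subtype] at himg
    rw [← himg]
    have h9 := hC (u.map (Function.Embedding.subtype _)) f
    simpa [htapp] using h9
  set B : Lp ℝ p (volume : Measure ℝ) →L[ℝ] Lp ℝ p (volume : Measure ℝ) :=
    Lmap.mkContinuous C hLbound with hB
  have hBapp : ∀ f, B f
      = ∑' j : {j : ℕ // lam j ∈ Set.Ico ((k : ℝ) * δ) (((k : ℝ) + 1) * δ)},
        gs (j:ℕ) f • e (j:ℕ) := fun f => rfl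
  -- finite-rank approximation
  have happrox : ∀ ε : ℝ, 0 < ε →
      ∃ Fop : Lp ℝ p (volume : Measure ℝ) →L[ℝ] Lp ℝ p (volume : Measure ℝ),
        IsCompactOperator ⇑Fop ∧ ‖B - Fop‖ ≤ M * ε := by
    intro ε hε
    obtain ⟨n, hn, idx, c, hp1⟩ := hpart ε hε
    have hsumite : ∀ (i : ℕ) (f : Lp ℝ p (volume : Measure ℝ)),
        Summable fun j : {j : ℕ // lam j ∈ Set.Ico ((k : ℝ) * δ) (((k : ℝ) + 1) * δ)} =>
          (if idx (j:ℕ) = i then gs (j:ℕ) f else 0) := by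
      intro i f
      apply Summable.of_norm_bounded (hsumabs f)
      intro j
      by_cases h : idx (j:ℕ) = i
      · simp [h, Real.norm_eq_abs]
      · simp [h]
    set s : ℕ → Lp ℝ p (volume : Measure ℝ) →ₗ[ℝ] ℝ := fun i =>
      { toFun := fun f => ∑' j : {j : ℕ // lam j ∈ Set.Ico ((k : ℝ) * δ) (((k : ℝ) + 1) * δ)},
          (if idx (j:ℕ) = i then gs (j:ℕ) f else 0)
        map_add' := by
          intro a b
          rw [← Summable.tsum_add (hsumite i a) (hsumite i b)]
          congr 1; funext j
          by_cases h : idx (j:ℕ) = i <;> simp [h]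
        map_smul' := by
          intro r a
          rw [RingHom.id_apply, smul_eq_mul, ← tsum_mul_left]
          congr 1; funext j
          by_cases h : idx (j:ℕ) = i <;> simp [h] } with hsdef
    have hsapp : ∀ i f, s i f
        = ∑' j : {j : ℕ // lam j ∈ Set.Ico ((k : ℝ) * δ) (((k : ℝ) + 1) * δ)},
          (if idx (j:ℕ) = i then gs (j:ℕ) f else 0) := fun i f => rfl
    have hsbound : ∀ i f, ‖s i f‖ ≤ M * ‖f‖ := by
      intro i f
      rw [hsapp]
      have h1 : ‖∑' j : {j : ℕ // lam j ∈ Set.Ico ((k : ℝ) * δ) (((k : ℝ) + 1) * δ)},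
          (if idx (j:ℕ) = i then gs (j:ℕ) f else 0)‖
          ≤ ∑' j : {j : ℕ // lam j ∈ Set.Ico ((k : ℝ) * δ) (((k : ℝ) + 1) * δ)},
            ‖(if idx (j:ℕ) = i then gs (j:ℕ) f else 0)‖ := by
        apply norm_tsum_le_tsum_norm
        apply Summable.of_norm_bounded (hsumabs f)
        intro j
        by_cases h : idx (j:ℕ) = i
        · simp [h, Real.norm_eq_abs]
        · simp [h]
      refine h1.trans ?_
      refine (Summable.tsum_le_tsum ?_ ?_ (hsumabs f)).trans (htsumabs f)
      · intro j
        by_cases h : idx (j:ℕ) = i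
        · simp [h, Real.norm_eq_abs]
        · simp [h]
      · apply Summable.of_norm_bounded (hsumabs f)
        intro j
        by_cases h : idx (j:ℕ) = i
        · simp [h, Real.norm_eq_abs]
        · simp [h]
    set Fop : Lp ℝ p (volume : Measure ℝ) →L[ℝ] Lp ℝ p (volume : Measure ℝ) :=
      ∑ i ∈ Finset.range n, ((s i).mkContinuous M (hsbound i)).smulRight (Φ (c i)) with hFop
    have hFopc : IsCompactOperator ⇑Fop := by
      rw [hFop]
      refine Finset.sum_induction _ (fun Top : Lp ℝ p (volume : Measure ℝ) →L[ℝ]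
          Lp ℝ p (volume : Measure ℝ) => IsCompactOperator ⇑Top)
        (fun a b ha hb => ?_) ?_ (fun i _ => aux_rankone_compact _ _)
      · show IsCompactOperator ⇑(a + b)
        rw [ContinuousLinearMap.coe_add']
        exact (IsCompactOperator.add ha hb)
      · show IsCompactOperator
          ⇑(0 : Lp ℝ p (volume : Measure ℝ) →L[ℝ] Lp ℝ p (volume : Measure ℝ))
        rw [ContinuousLinearMap.coe_zero']
        exact isCompactOperator_zero
    have hsumΦ : ∀ f : Lp ℝ p (volume : Measure ℝ),
        Summable fun j : {j : ℕ // lam j ∈ Set.Ico ((k : ℝ) * δ) (((k : ℝ) + 1) * δ)} =>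
          gs (j:ℕ) f • Φ (c (idx (j:ℕ))) := by
      intro f
      apply Summable.of_norm_bounded (g := fun j : {j : ℕ // lam j ∈ Set.Ico ((k : ℝ) * δ) (((k : ℝ) + 1) * δ)} =>
          |gs (j:ℕ) f| * γ) ((hsumabs f).mul_right γ)
      intro j
      rw [norm_smul, Real.norm_eq_abs, hΦnorm]
    have hdiff : ∀ f : Lp ℝ p (volume : Measure ℝ), ‖B f - Fop f‖ ≤ M * ε * ‖f‖ := by
      intro f
      have hFopf : Fop f
          = ∑' j : {j : ℕ // lam j ∈ Set.Ico ((k : ℝ) * δ) (((k : ℝ) + 1) * δ)},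
            gs (j:ℕ) f • Φ (c (idx (j:ℕ))) := by
        rw [hFop, ContinuousLinearMap.sum_apply]
        have h1 : ∀ i ∈ Finset.range n,
            (((s i).mkContinuous M (hsbound i)).smulRight (Φ (c i))) f
              = ∑' j : {j : ℕ // lam j ∈ Set.Ico ((k : ℝ) * δ) (((k : ℝ) + 1) * δ)},
                (if idx (j:ℕ) = i then gs (j:ℕ) f else 0) • Φ (c i) := by
          intro i _
          rw [ContinuousLinearMap.smulRight_apply]
          have h0 : (((s i).mkContinuous M (hsbound i)) f)
              = ∑' j : {j : ℕ // lam j ∈ Set.Ico ((k : ℝ) * δ) (((k : ℝ) + 1) * δ)},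
                (if idx (j:ℕ) = i then gs (j:ℕ) f else 0) := rfl
          rw [h0, ← Summable.tsum_smul_const (hsumite i f) (Φ (c i))]
        rw [Finset.sum_congr rfl h1,
          ← Summable.tsum_finsetSum (fun i _ => (hsumite i f).smul_const (Φ (c i)))]
        congr 1; funext j
        have hmem : idx (j:ℕ) ∈ Finset.range n := Finset.mem_range.mpr (hp1 (j:ℕ) j.2).1
        have h2 : ∀ i ∈ Finset.range n,
            (if idx (j:ℕ) = i then gs (j:ℕ) f else 0) • Φ (c i)
              = if idx (j:ℕ) = i then gs (j:ℕ) f • Φ (c i) else 0 := by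
          intro i _
          by_cases h : idx (j:ℕ) = i <;> simp [h]
        rw [Finset.sum_congr rfl h2,
          Finset.sum_ite_eq (Finset.range n) (idx (j:ℕ)) (fun i => gs (j:ℕ) f • Φ (c i)),
          if_pos hmem]
      have hsub : B f - Fop f
          = ∑' j : {j : ℕ // lam j ∈ Set.Ico ((k : ℝ) * δ) (((k : ℝ) + 1) * δ)},
            gs (j:ℕ) f • (e (j:ℕ) - Φ (c (idx (j:ℕ)))) := by
        rw [hBapp, hFopf, ← Summable.tsum_sub (hsummv f) (hsumΦ f)]
        congr 1; funext j; rw [smul_sub]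
      rw [hsub]
      have hbd : ∀ j : {j : ℕ // lam j ∈ Set.Ico ((k : ℝ) * δ) (((k : ℝ) + 1) * δ)},
          ‖gs (j:ℕ) f • (e (j:ℕ) - Φ (c (idx (j:ℕ))))‖ ≤ |gs (j:ℕ) f| * ε := by
        intro j
        rw [norm_smul, Real.norm_eq_abs]
        exact mul_le_mul_of_nonneg_left (hp1 (j:ℕ) j.2).2 (abs_nonneg _)
      calc ‖∑' j : {j : ℕ // lam j ∈ Set.Ico ((k : ℝ) * δ) (((k : ℝ) + 1) * δ)},
            gs (j:ℕ) f • (e (j:ℕ) - Φ (c (idx (j:ℕ))))‖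
          ≤ (∑' j : {j : ℕ // lam j ∈ Set.Ico ((k : ℝ) * δ) (((k : ℝ) + 1) * δ)},
              |gs (j:ℕ) f|) * ε :=
            tsum_of_norm_bounded ((hsumabs f).hasSum.mul_right ε) hbd
        _ ≤ M * ‖f‖ * ε := mul_le_mul_of_nonneg_right (htsumabs f) hε.le
        _ = M * ε * ‖f‖ := by ring
    refine ⟨Fop, hFopc, ?_⟩
    apply ContinuousLinearMap.opNorm_le_bound _ (by positivity)
    intro f
    rw [ContinuousLinearMap.sub_apply]
    exact hdiff f
  -- compactness of `B`
  have hBc : IsCompactOperator ⇑B := by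
    have hcl : IsClosed {Top : Lp ℝ p (volume : Measure ℝ) →L[ℝ] Lp ℝ p (volume : Measure ℝ) |
        IsCompactOperator ⇑Top} := isClosed_setOf_isCompactOperator
    have hmem : B ∈ closure {Top : Lp ℝ p (volume : Measure ℝ) →L[ℝ]
        Lp ℝ p (volume : Measure ℝ) | IsCompactOperator ⇑Top} := by
      rw [Metric.mem_closure_iff]
      intro ε hε
      obtain ⟨Fop, h1, h2⟩ := happrox (ε / (2*(M+1))) (by positivity)
      refine ⟨Fop, h1, ?_⟩
      rw [dist_eq_norm]
      calc ‖B - Fop‖ ≤ M * (ε / (2*(M+1))) := h2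
        _ < ε := by
            rw [mul_div_assoc', div_lt_iff₀ (by positivity : (0:ℝ) < 2*(M+1))]
            nlinarith
    rwa [hcl.closure_eq] at hmem
  exact ⟨B, hBc, fun f => (hsummv f).hasSum⟩
end

section
/- Let $X$ be a Banach space containing no subspace isomorphic to $c_0$. Then every weakly unconditionally convergent (weakly unconditionally Cauchy) series in $X$ converges unconditionally. -/
/-!
If `∑ xₙ` is weakly unconditionally Cauchy but does not converge, the Cauchy criterion fails along
pairwise disjoint blocks, and the block sums `yₖ` are again weakly unconditionally Cauchy, bounded
below in norm, hence weakly null. By Banach–Steinhaus `‖∑_{k∈s} aₖ yₖ‖ ≤ M · max |aₖ|`, so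
`v ↦ ∑ vₖ yₖ` is a bounded operator on `c₀`. A weakly null sequence with norms `≥ ε` stays at
distance `≥ ε/3` from any finite-dimensional subspace, which lets one pick a subsequence `zₖ` and
functionals `ψₖ` of norm `≤ 1` vanishing on `z₀, …, zₖ₋₁` with `ψₖ zₖ ≥ ε/3` and
`∑_{j>k} |ψₖ zⱼ| ≤ ε/6`. Testing `∑ vⱼ zⱼ` against `ψₖ` gives `‖∑ vⱼ zⱼ‖ ≥ (ε/3)|vₖ| - (ε/6)‖v‖`
for every `k`, so the operator on `c₀` built from `z` is bounded below.
-/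

open Filter Function Topology Metric ZeroAtInfty

namespace ZeroAtInftyContinuousMap

variable {α β : Type*} [TopologicalSpace α] [SeminormedAddCommGroup β] (f : C₀(α, β))

theorem norm_apply_le (x : α) : ‖f x‖ ≤ ‖f‖ := by
  simpa [norm_toBCF_eq_norm] using f.toBCF.norm_coe_le_norm x

theorem norm_le {C : ℝ} (hC : 0 ≤ C) : ‖f‖ ≤ C ↔ ∀ x, ‖f x‖ ≤ C := by
  simpa [norm_toBCF_eq_norm] using f.toBCF.norm_le hC

end ZeroAtInftyContinuousMap

theorem Submodule.exists_dual_map_eq_zero_and_eq_infDist {𝕜 E : Type*} [RCLike 𝕜]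
    [SeminormedAddCommGroup E] [NormedSpace 𝕜 E] (F : Submodule 𝕜 E) (z : E) :
    ∃ ψ : StrongDual 𝕜 E, ‖ψ‖ ≤ 1 ∧ (∀ w ∈ F, ψ w = 0) ∧ ψ z = infDist z F := by
  obtain ⟨g, hg, hgz⟩ := exists_dual_vector'' 𝕜 (F.mkQ z)
  let q : E →L[𝕜] E ⧸ F := F.mkQ.mkContinuous 1 fun m => by
    simpa using Submodule.Quotient.norm_mk_le F m
  refine ⟨g.comp q, ?_, fun w hw => ?_, ?_⟩
  · calc ‖g.comp q‖ ≤ ‖g‖ * ‖q‖ := g.opNorm_comp_le q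
      _ ≤ 1 * 1 := by gcongr; exact LinearMap.mkContinuous_norm_le _ zero_le_one _
      _ = 1 := one_mul 1
  · simp [q, (Submodule.Quotient.mk_eq_zero F).mpr hw]
  · have hz : ‖F.mkQ z‖ = infDist z F := QuotientAddGroup.norm_mk (S := F.toAddSubgroup) z
    change g (F.mkQ z) = _
    rw [hgz, hz]

section FarPoint

variable {X : Type*} [NormedAddCommGroup X] [NormedSpace ℝ X] {y : ℕ → X} {ε δ C : ℝ}

theorem le_two_mul_of_forall_norm_sub_le
    (hy : ∀ φ : X →L[ℝ] ℝ, Tendsto (fun n => φ (y n)) atTop (𝓝 0))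
    (hε : ∀ n, ε ≤ ‖y n‖) (hC : ∀ n, ‖y n‖ ≤ C) (F : Submodule ℝ X) [FiniteDimensional ℝ F]
    (w : ℕ → F) (hw : ∀ n, ‖y n - w n‖ ≤ δ) : ε ≤ 2 * δ := by
  have hδ : 0 ≤ δ := (norm_nonneg _).trans (hw 0)
  have hwC (n : ℕ) : w n ∈ closedBall (0 : F) (C + δ) := by
    rw [mem_closedBall_zero_iff, Submodule.coe_norm]
    linarith [norm_le_insert' (w n : X) (y n), norm_sub_rev (w n : X) (y n), hC n, hw n]
  obtain ⟨l, -, φ, hφ, hlim⟩ := (isCompact_closedBall (0 : F) (C + δ)).tendsto_subseq hwC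
  have hlim' : Tendsto (fun j => (w (φ j) : X)) atTop (𝓝 l) :=
    (continuous_subtype_val.tendsto l).comp hlim
  -- `y ∘ φ` is weakly null and `δ`-close to `w ∘ φ`, which converges to `l`
  have hl : ‖(l : X)‖ ≤ δ := NormedSpace.norm_le_dual_bound ℝ _ hδ fun f => by
    have h := ((f.continuous.tendsto _).comp hlim').sub ((hy f).comp hφ.tendsto_atTop)
    rw [sub_zero] at h
    refine le_of_tendsto h.norm (Eventually.of_forall fun j => ?_)
    rw [comp_apply, comp_apply, ← map_sub, mul_comm]
    exact f.le_opNorm_of_le (norm_sub_rev (y _) _ ▸ hw _)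
  refine le_of_forall_pos_lt_add fun γ hγ => ?_
  obtain ⟨j, hj⟩ := (hlim'.eventually (ball_mem_nhds _ hγ)).exists
  rw [dist_eq_norm] at hj
  calc ε ≤ ‖y (φ j)‖ := hε _
    _ ≤ ‖y (φ j) - w (φ j)‖ + ‖(w (φ j) : X) - l‖ + ‖(l : X)‖ := by
      simpa using norm_add₃_le (a := y (φ j) - w (φ j)) (b := (w (φ j) : X) - l) (c := l)
    _ < 2 * δ + γ := by linarith [hw (φ j)]

theorem frequently_le_infDist
    (hy : ∀ φ : X →L[ℝ] ℝ, Tendsto (fun n => φ (y n)) atTop (𝓝 0))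
    (hε : ∀ n, ε ≤ ‖y n‖) (hC : ∀ n, ‖y n‖ ≤ C) (F : Submodule ℝ X) [FiniteDimensional ℝ F]
    (hδε : 2 * δ < ε) : ∃ᶠ n in atTop, δ ≤ infDist (y n) F := by
  by_contra h
  simp only [not_frequently, not_le, eventually_atTop] at h
  obtain ⟨N, hN⟩ := h
  have hclose (n : ℕ) : ∃ w ∈ F, dist (y (n + N)) w < δ :=
    (infDist_lt_iff ⟨0, F.zero_mem⟩).mp (hN _ (Nat.le_add_left N n))
  choose w hwF hw using hclose
  refine hδε.not_ge (le_two_mul_of_forall_norm_sub_le (y := fun n => y (n + N))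
    (fun f => (hy f).comp (tendsto_add_atTop_nat N)) (fun n => hε _) (fun n => hC _) F
    (fun n => ⟨w n, hwF n⟩) fun n => ?_)
  simpa [dist_eq_norm] using (hw n).le

end FarPoint

theorem Summable.exists_tsum_comp_le {f : ℕ → ℝ} (hf : Summable f) (hf0 : ∀ n, 0 ≤ f n)
    {η : ℝ} (hη : 0 < η) :
    ∃ N, ∀ g : ℕ → ℕ, Injective g → (∀ j, N ≤ g j) → ∑' j, f (g j) ≤ η := by
  obtain ⟨N, hN⟩ := ((tendsto_sum_nat_add f).eventually (ge_mem_nhds hη)).exists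
  refine ⟨N, fun g hg hgN => ?_⟩
  have hshift : (fun j => f (g j)) = (fun k => f (k + N)) ∘ fun j => g j - N :=
    funext fun j => by simp [Nat.sub_add_cancel (hgN j)]
  rw [hshift]
  refine (tsum_comp_le_tsum_of_inj ((summable_nat_add_iff N).mpr hf) (fun _ => hf0 _)
    fun a b hab => hg ?_).trans hN
  have := hgN a
  have := hgN b
  omega

section

variable {ι X : Type*} [NormedAddCommGroup X] [NormedSpace ℝ X]

def WeaklyUnconditionallyCauchy (x : ι → X) : Prop :=
  ∀ φ : X →L[ℝ] ℝ, Summable fun i => |φ (x i)|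

namespace WeaklyUnconditionallyCauchy

variable {x : ι → X}

theorem comp_injective {κ : Type*} (hx : WeaklyUnconditionallyCauchy x) {g : κ → ι}
    (hg : g.Injective) : WeaklyUnconditionallyCauchy (x ∘ g) :=
  fun φ => (hx φ).comp_injective hg

theorem tendsto_zero {x : ℕ → X} (hx : WeaklyUnconditionallyCauchy x) (φ : X →L[ℝ] ℝ) :
    Tendsto (fun n => φ (x n)) atTop (𝓝 0) :=
  tendsto_zero_iff_abs_tendsto_zero _ |>.mpr (hx φ).tendsto_atTop_zero

theorem sum_of_pairwise_disjoint (hx : WeaklyUnconditionallyCauchy x) {t : ℕ → Finset ι}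
    (ht : Pairwise (Disjoint on t)) :
    WeaklyUnconditionallyCauchy fun k => ∑ i ∈ t k, x i := by
  classical
  intro φ
  refine summable_of_sum_le (c := ∑' i, |φ (x i)|) (fun k => abs_nonneg _) fun s => ?_
  calc ∑ k ∈ s, |φ (∑ i ∈ t k, x i)|
      ≤ ∑ k ∈ s, ∑ i ∈ t k, |φ (x i)| := by
        gcongr with k
        rw [map_sum]
        exact Finset.abs_sum_le_sum_abs _ _
    _ = ∑ i ∈ s.biUnion t, |φ (x i)| := (Finset.sum_biUnion (ht.set_pairwise _)).symm
    _ ≤ ∑' i, |φ (x i)| := (hx φ).sum_le_tsum _ fun _ _ => abs_nonneg _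

theorem exists_tsum_abs_le (hx : WeaklyUnconditionallyCauchy x) :
    ∃ M, 0 ≤ M ∧ ∀ φ : X →L[ℝ] ℝ, ∑' i, |φ (x i)| ≤ M * ‖φ‖ := by
  let g : Finset ι × {a : ι → ℝ // ∀ i, |a i| ≤ 1} → StrongDual ℝ X →L[ℝ] ℝ :=
    fun p => NormedSpace.inclusionInDoubleDual ℝ X (∑ i ∈ p.1, p.2.1 i • x i)
  have hg : ∀ p φ, g p φ = ∑ i ∈ p.1, p.2.1 i * φ (x i) := by
    intro p φ
    simp [g, map_sum]
  obtain ⟨M, hM⟩ := banach_steinhaus (g := g) fun φ => by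
    refine ⟨∑' i, |φ (x i)|, fun p => ?_⟩
    rw [hg, Real.norm_eq_abs]
    refine (Finset.abs_sum_le_sum_abs _ _).trans ?_
    refine le_trans ?_ ((hx φ).sum_le_tsum p.1 fun _ _ => abs_nonneg _)
    refine Finset.sum_le_sum fun i _ => ?_
    rw [abs_mul]
    exact mul_le_of_le_one_left (abs_nonneg _) (p.2.2 i)
  refine ⟨M, (norm_nonneg _).trans (hM (∅, ⟨0, by simp⟩)), fun φ => ?_⟩
  refine (hx φ).tsum_le_of_sum_le fun s => ?_
  let sgn : {a : ι → ℝ // ∀ i, |a i| ≤ 1} :=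
    ⟨fun i => SignType.sign (φ (x i)), fun i => by
      rcases lt_trichotomy (φ (x i)) 0 with h | h | h <;> simp [h]⟩
  calc ∑ i ∈ s, |φ (x i)| = g (s, sgn) φ := by simp [hg, sgn, sign_mul_self]
    _ ≤ ‖g (s, sgn) φ‖ := Real.le_norm_self _
    _ ≤ ‖g (s, sgn)‖ * ‖φ‖ := (g (s, sgn)).le_opNorm φ
    _ ≤ M * ‖φ‖ := by gcongr; exact hM _

theorem exists_norm_sum_smul_le (hx : WeaklyUnconditionallyCauchy x) :
    ∃ M, 0 ≤ M ∧ ∀ (s : Finset ι) (a : ι → ℝ) (r : ℝ), 0 ≤ r → (∀ i ∈ s, |a i| ≤ r) →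
      ‖∑ i ∈ s, a i • x i‖ ≤ M * r := by
  obtain ⟨M, hM0, hM⟩ := hx.exists_tsum_abs_le
  refine ⟨M, hM0, fun s a r hr ha =>
    NormedSpace.norm_le_dual_bound ℝ _ (by positivity) fun φ => ?_⟩
  calc ‖φ (∑ i ∈ s, a i • x i)‖ = |∑ i ∈ s, a i * φ (x i)| := by simp [map_sum]
    _ ≤ ∑ i ∈ s, |a i| * |φ (x i)| := by
      simpa only [abs_mul] using Finset.abs_sum_le_sum_abs (fun i => a i * φ (x i)) s
    _ ≤ ∑ i ∈ s, r * |φ (x i)| := Finset.sum_le_sum fun i hi => by gcongr; exact ha i hi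
    _ = r * ∑ i ∈ s, |φ (x i)| := by rw [Finset.mul_sum]
    _ ≤ r * ∑' i, |φ (x i)| := by gcongr; exact (hx φ).sum_le_tsum _ fun _ _ => abs_nonneg _
    _ ≤ r * (M * ‖φ‖) := by gcongr; exact hM φ
    _ = M * r * ‖φ‖ := by ring

theorem exists_norm_le (hx : WeaklyUnconditionallyCauchy x) : ∃ C, ∀ i, ‖x i‖ ≤ C := by
  obtain ⟨M, -, hM⟩ := hx.exists_norm_sum_smul_le
  exact ⟨M, fun i => by simpa using hM {i} 1 1 zero_le_one (by simp)⟩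

theorem summable_smul_of_tendsto_zero [CompleteSpace X] (hx : WeaklyUnconditionallyCauchy x)
    {v : ι → ℝ} (hv : Tendsto v cofinite (𝓝 0)) : Summable fun i => v i • x i := by
  obtain ⟨M, hM0, hM⟩ := hx.exists_norm_sum_smul_le
  refine summable_iff_vanishing_norm.mpr fun δ hδ => ?_
  have hr : 0 < δ / (M + 1) := by positivity
  have hsmall : {i | ¬ |v i| < δ / (M + 1)}.Finite := by
    simpa only [mem_ball_zero_iff, Real.norm_eq_abs] using
      eventually_cofinite.mp (hv (ball_mem_nhds 0 hr))
  refine ⟨hsmall.toFinset, fun s hs => ?_⟩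
  calc ‖∑ i ∈ s, v i • x i‖ ≤ M * (δ / (M + 1)) := hM s v _ hr.le fun i hi =>
        (by simpa using Finset.disjoint_left.mp hs hi : |v i| < _).le
    _ < δ := by rw [mul_div_assoc', div_lt_iff₀ (by positivity)]; linarith

theorem exists_hasSum_c0 [CompleteSpace X] {x : ℕ → X} (hx : WeaklyUnconditionallyCauchy x) :
    ∃ T : C₀(ℕ, ℝ) →L[ℝ] X, ∀ v, HasSum (fun k => v k • x k) (T v) := by
  have hsum (v : C₀(ℕ, ℝ)) : Summable fun k => v k • x k :=
    hx.summable_smul_of_tendsto_zero <| by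
      simpa [Nat.cofinite_eq_atTop] using v.zero_at_infty'
  let ev (k : ℕ) : C₀(ℕ, ℝ) →L[ℝ] ℝ :=
    LinearMap.mkContinuous ⟨⟨fun v => v k, fun _ _ => rfl⟩, fun _ _ => rfl⟩ 1 fun v => by
      simpa using v.norm_apply_le k
  let g (n : ℕ) : C₀(ℕ, ℝ) →L[ℝ] X := ∑ k ∈ Finset.range n, (ev k).smulRight (x k)
  -- continuity of the pointwise limit of the partial-sum operators is Banach–Steinhaus
  refine ⟨continuousLinearMapOfTendsto (l := atTop) g (f := fun v => ∑' k, v k • x k)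
    (tendsto_pi_nhds.mpr fun v => ?_), fun v => (hsum v).hasSum⟩
  simpa [g, ev] using (hsum v).hasSum.tendsto_sum_nat

theorem exists_subseq_almost_biorthogonal {y : ℕ → X} (hy : WeaklyUnconditionallyCauchy y)
    {ε η : ℝ} (hε0 : 0 < ε) (hε : ∀ n, ε ≤ ‖y n‖) (hη : 0 < η) :
    ∃ (n : ℕ → ℕ) (ψ : ℕ → X →L[ℝ] ℝ), StrictMono n ∧ (∀ k, ‖ψ k‖ ≤ 1) ∧
      (∀ k, ε / 3 ≤ ψ k (y (n k))) ∧ (∀ j k, j < k → ψ k (y (n j)) = 0) ∧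
      ∀ k, ∑' j, |ψ k (y (n (j + (k + 1))))| ≤ η := by
  classical
  obtain ⟨C, hC⟩ := hy.exists_norm_le
  choose N hN using fun φ : X →L[ℝ] ℝ =>
    Summable.exists_tsum_comp_le (hy φ) (fun _ => abs_nonneg _) hη
  -- each new pair `(n, ψ)` has `ψ` vanishing on the earlier `y`'s and `n` past their tail
  -- thresholds `N`
  obtain ⟨f, hfP, hfr⟩ := exists_seq_of_forall_finset_exists
    (fun a : ℕ × (X →L[ℝ] ℝ) => ‖a.2‖ ≤ 1 ∧ ε / 3 ≤ a.2 (y a.1))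
    (fun a b => a.1 < b.1 ∧ N a.2 ≤ b.1 ∧ b.2 (y a.1) = 0) fun s _ => by
      let F := Submodule.span ℝ ((s.image fun a => y a.1 : Finset X) : Set X)
      have : FiniteDimensional ℝ F := FiniteDimensional.span_finset ℝ _
      obtain ⟨n, hn, hfar⟩ := (frequently_le_infDist (δ := ε / 3) hy.tendsto_zero hε
        hC F (by linarith)).forall_exists_of_atTop (s.sup fun a => max (a.1 + 1) (N a.2))
      obtain ⟨ψ, hψ, hψF, hψn⟩ := F.exists_dual_map_eq_zero_and_eq_infDist (y n)
      refine ⟨(n, ψ), ⟨hψ, hψn ▸ hfar⟩, fun a ha => ?_⟩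
      have hsup := (Finset.le_sup (f := fun a => max (a.1 + 1) (N a.2)) ha).trans hn
      exact ⟨by omega, by omega, hψF _ (Submodule.subset_span (Finset.mem_image_of_mem _ ha))⟩
  have hmono : StrictMono fun k => (f k).1 := fun j k h => (hfr j k h).1
  refine ⟨fun k => (f k).1, fun k => (f k).2, hmono, fun k => (hfP k).1, fun k => (hfP k).2,
    fun j k h => (hfr j k h).2.2, fun k => hN _ _ (fun a b hab => ?_) fun j => ?_⟩
  · have := hmono.injective hab
    omega
  · exact (hfr k (k + 1) k.lt_succ_self).2.1.trans (hmono.monotone (by omega))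

section LowerBound

variable {z : ℕ → X} {T : C₀(ℕ, ℝ) →L[ℝ] X} {ψ : ℕ → X →L[ℝ] ℝ} {c η : ℝ}

theorem mul_abs_apply_le_of_almost_biorthogonal (hz : WeaklyUnconditionallyCauchy z)
    (hT : ∀ v, HasSum (fun k => v k • z k) (T v)) (hψ : ∀ k, ‖ψ k‖ ≤ 1)
    (hc : ∀ k, c ≤ ψ k (z k)) (hzero : ∀ j k, j < k → ψ k (z j) = 0)
    (htail : ∀ k, ∑' j, |ψ k (z (j + (k + 1)))| ≤ η) (v : C₀(ℕ, ℝ)) (k : ℕ) :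
    c * |v k| ≤ ‖T v‖ + η * ‖v‖ := by
  have hv (j : ℕ) : |v j| ≤ ‖v‖ := by simpa using v.norm_apply_le j
  have hsum : HasSum (fun j => v j * ψ k (z j)) (ψ k (T v)) := by
    simpa using (hT v).mapL (ψ k)
  have hhead : ∑ j ∈ Finset.range (k + 1), v j * ψ k (z j) = v k * ψ k (z k) := by
    rw [Finset.sum_range_succ, Finset.sum_eq_zero fun j hj => by
      rw [hzero j k (Finset.mem_range.mp hj), mul_zero], zero_add]
  have habs : Summable fun j => |ψ k (z (j + (k + 1)))| :=
    (summable_nat_add_iff (f := fun j => |ψ k (z j)|) (k + 1)).mpr (hz (ψ k))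
  have htail' : |∑' j, v (j + (k + 1)) * ψ k (z (j + (k + 1)))| ≤ ‖v‖ * η := by
    calc |∑' j, v (j + (k + 1)) * ψ k (z (j + (k + 1)))|
        ≤ ∑' j, ‖v‖ * |ψ k (z (j + (k + 1)))| := by
          rw [← Real.norm_eq_abs]
          refine tsum_of_norm_bounded (habs.mul_left _).hasSum fun j => ?_
          rw [Real.norm_eq_abs, abs_mul]
          exact mul_le_mul_of_nonneg_right (hv _) (abs_nonneg _)
      _ = ‖v‖ * ∑' j, |ψ k (z (j + (k + 1)))| := tsum_mul_left
      _ ≤ ‖v‖ * η := by gcongr; exact htail k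
  have hψT : |ψ k (T v)| ≤ ‖T v‖ := by
    simpa using (ψ k).le_of_opNorm_le (hψ k) (T v)
  have hsplit := hsum.summable.sum_add_tsum_nat_add (k + 1)
  rw [hhead, hsum.tsum_eq] at hsplit
  calc c * |v k| ≤ |ψ k (z k)| * |v k| := by
        gcongr; exact (hc k).trans (le_abs_self _)
    _ = |ψ k (T v) - ∑' j, v (j + (k + 1)) * ψ k (z (j + (k + 1)))| := by
        rw [← hsplit, add_sub_cancel_right, abs_mul, mul_comm]
    _ ≤ ‖T v‖ + η * ‖v‖ := by
        linarith [abs_sub (ψ k (T v)) (∑' j, v (j + (k + 1)) * ψ k (z (j + (k + 1))))]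

theorem mul_norm_le_of_almost_biorthogonal (hz : WeaklyUnconditionallyCauchy z)
    (hT : ∀ v, HasSum (fun k => v k • z k) (T v)) (hψ : ∀ k, ‖ψ k‖ ≤ 1)
    (hc : ∀ k, c ≤ ψ k (z k)) (hzero : ∀ j k, j < k → ψ k (z j) = 0)
    (htail : ∀ k, ∑' j, |ψ k (z (j + (k + 1)))| ≤ η) (hηc : η < c) (v : C₀(ℕ, ℝ)) :
    (c - η) * ‖v‖ ≤ ‖T v‖ := by
  have hη : 0 ≤ η := (tsum_nonneg fun _ => abs_nonneg _).trans (htail 0)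
  have hc0 : 0 < c := hη.trans_lt hηc
  have hv : ‖v‖ ≤ (‖T v‖ + η * ‖v‖) / c := (v.norm_le (by positivity)).mpr fun k => by
    rw [Real.norm_eq_abs, le_div_iff₀ hc0, mul_comm]
    exact hz.mul_abs_apply_le_of_almost_biorthogonal hT hψ hc hzero htail v k
  rw [le_div_iff₀ hc0] at hv
  linarith

end LowerBound

theorem exists_c0_embedding [CompleteSpace X] {y : ℕ → X} (hy : WeaklyUnconditionallyCauchy y)
    {ε : ℝ} (hε0 : 0 < ε) (hε : ∀ n, ε ≤ ‖y n‖) :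
    ∃ (f : C₀(ℕ, ℝ) →L[ℝ] X) (c : ℝ), 0 < c ∧ ∀ v, c * ‖v‖ ≤ ‖f v‖ := by
  obtain ⟨n, ψ, hn, hψ, hc, hzero, htail⟩ :=
    hy.exists_subseq_almost_biorthogonal (η := ε / 6) hε0 hε (by positivity)
  have hz : WeaklyUnconditionallyCauchy (y ∘ n) := hy.comp_injective hn.injective
  obtain ⟨T, hT⟩ := hz.exists_hasSum_c0
  exact ⟨T, ε / 3 - ε / 6, by linarith,
    hz.mul_norm_le_of_almost_biorthogonal hT hψ hc hzero htail (by linarith)⟩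

end WeaklyUnconditionallyCauchy

end

theorem exists_pairwise_disjoint_le_norm_sum_of_not_summable {ι E : Type*}
    [NormedAddCommGroup E] [CompleteSpace E] {x : ι → E} (hx : ¬ Summable x) :
    ∃ ε > 0, ∃ t : ℕ → Finset ι, Pairwise (Disjoint on t) ∧ ∀ k, ε ≤ ‖∑ i ∈ t k, x i‖ := by
  classical
  obtain ⟨ε, hε, h⟩ : ∃ ε > 0, ∀ s : Finset ι, ∃ t, Disjoint t s ∧ ε ≤ ‖∑ i ∈ t, x i‖ := by
    simpa [summable_iff_vanishing_norm] using hx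
  choose g hgs hg using h
  obtain ⟨t, ht, htr⟩ := exists_seq_of_forall_finset_exists (fun t => ε ≤ ‖∑ i ∈ t, x i‖)
    Disjoint fun S _ => ⟨g (S.sup id), hg _, fun a ha =>
      (hgs _).symm.mono_left (Finset.le_sup (f := id) ha)⟩
  refine ⟨ε, hε, t, fun j k hjk => ?_, ht⟩
  rcases hjk.lt_or_gt with h | h
  exacts [htr j k h, (htr k j h).symm]

/-- Bessaga–Pełczyński: if a Banach space `X` contains no subspace
isomorphic to `c₀` (i.e. there is no continuous linear embedding of `c₀` into `X`
bounded below), then every weakly unconditionally Cauchy series in `X` converges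
unconditionally. -/
theorem wuc_implies_unconditional_of_no_c0
    (X : Type*) [NormedAddCommGroup X] [NormedSpace ℝ X] [CompleteSpace X]
    (hc0 : ¬ ∃ (f : C₀(ℕ, ℝ) →L[ℝ] X) (c : ℝ), 0 < c ∧ ∀ v, c * ‖v‖ ≤ ‖f v‖)
    (x : ℕ → X)
    (hwuc : ∀ φ : X →L[ℝ] ℝ, Summable (fun n => |φ (x n)|)) :
    ∃ s : X, HasSum x s := by
  by_contra hx
  obtain ⟨ε, hε, t, ht, hblock⟩ := exists_pairwise_disjoint_le_norm_sum_of_not_summable hx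
  have hy : WeaklyUnconditionallyCauchy fun k => ∑ i ∈ t k, x i :=
    WeaklyUnconditionallyCauchy.sum_of_pairwise_disjoint hwuc ht
  exact hc0 (hy.exists_c0_embedding hε hblock)
end

section
/- Let $H$ be a Hilbert space and $\{(x_n, y_n)\}_{n=1}^\infty$ a $K$-unconditional Schauder frame in $H$ (where $y_n \in H$ acts via the inner product). Then $\sum_n |\langle x, y_n \rangle|^2 \|x_n\|^2 \le K^2 \|x\|^2$ for every $x \in H$. In particular, if $\inf_n \|x_n\| > 0$ then $\{y_n\}$ is a Bessel sequence. -/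
open scoped RealInnerProductSpace

lemma sign_choice {H : Type*} [NormedAddCommGroup H] [InnerProductSpace ℝ H]
    (s : Finset ℕ) (a : ℕ → H) :
    ∃ ε : ℕ → ℝ, (∀ n, |ε n| ≤ 1) ∧
      ∑ n ∈ s, ‖a n‖ ^ 2 ≤ ‖∑ n ∈ s, ε n • a n‖ ^ 2 := by
  classical
  induction s using Finset.induction_on with
  | empty => exact ⟨fun _ => 1, fun n => by norm_num, by simp⟩
  | @insert i s hi ih =>
    obtain ⟨ε, hε, hle⟩ := ih
    set t := ∑ n ∈ s, ε n • a n with ht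
    set σ : ℝ := if 0 ≤ ⟪t, a i⟫ then 1 else -1 with hσ
    refine ⟨Function.update ε i σ, ?_, ?_⟩
    · intro n
      rcases eq_or_ne n i with rfl | h
      · simp only [Function.update_self, hσ]
        split <;> norm_num
      · simpa [Function.update_of_ne h] using hε n
    · rw [Finset.sum_insert hi, Finset.sum_insert hi]
      have hsum : ∑ n ∈ s, Function.update ε i σ n • a n = t := by
        rw [ht]
        refine Finset.sum_congr rfl fun n hn => ?_
        rw [Function.update_of_ne (ne_of_mem_of_not_mem hn hi)]
      rw [Function.update_self, hsum]
      have hpar : ‖σ • a i + t‖ ^ 2 = ‖σ • a i‖ ^ 2 + 2 * ⟪σ • a i, t⟫ + ‖t‖ ^ 2 :=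
        norm_add_sq_real _ _
      have hσa : ‖σ • a i‖ = ‖a i‖ := by
        rw [norm_smul, Real.norm_eq_abs, hσ]; split <;> simp
      have hinner : 0 ≤ ⟪σ • a i, t⟫ := by
        rw [real_inner_smul_left, hσ]
        split
        · simpa [real_inner_comm] using ‹0 ≤ ⟪t, a i⟫›
        · rw [real_inner_comm]; nlinarith [not_le.mp ‹¬ 0 ≤ ⟪t, a i⟫›]
      have hσa2 : ‖σ • a i‖ ^ 2 = ‖a i‖ ^ 2 := by rw [hσa]
      linarith [hpar, hle, hinner, hσa2]

/-- if `{(x_n, y_n)}` is a `K`-unconditional Schauder frame in a Hilbert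
space `H`, then `∑_n |⟪x, y_n⟫|² ‖x_n‖² ≤ K² ‖x‖²` for every `x`; in particular if
`inf_n ‖x_n‖ > 0` then `{y_n}` is a Bessel sequence. -/
theorem unconditional_frame_bessel
    (H : Type*) [NormedAddCommGroup H] [InnerProductSpace ℝ H] [CompleteSpace H]
    (x y : ℕ → H) (K : ℝ)
    (hframe : ∀ v : H, HasSum (fun n => ⟪v, y n⟫ • x n) v)
    (hK : ∀ (v : H) (θ : ℕ → ℝ), (∀ n, |θ n| ≤ 1) →
      ∃ s, HasSum (fun n => (θ n * ⟪v, y n⟫) • x n) s ∧ ‖s‖ ≤ K * ‖v‖) :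
    (∀ v : H, Summable (fun n => |⟪v, y n⟫| ^ 2 * ‖x n‖ ^ 2) ∧
      ∑' n, |⟪v, y n⟫| ^ 2 * ‖x n‖ ^ 2 ≤ K ^ 2 * ‖v‖ ^ 2) ∧
    ((∃ c > 0, ∀ n, c ≤ ‖x n‖) →
      ∃ B : ℝ, ∀ v : H, Summable (fun n => |⟪v, y n⟫| ^ 2) ∧
        ∑' n, |⟪v, y n⟫| ^ 2 ≤ B * ‖v‖ ^ 2) := by
  classical
  have key : ∀ (v : H) (s : Finset ℕ),
      ∑ n ∈ s, |⟪v, y n⟫| ^ 2 * ‖x n‖ ^ 2 ≤ K ^ 2 * ‖v‖ ^ 2 := by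
    intro v s
    set a : ℕ → H := fun n => ⟪v, y n⟫ • x n with ha
    obtain ⟨ε, hε, hle⟩ := sign_choice s a
    set θ : ℕ → ℝ := fun n => if n ∈ s then ε n else 0 with hθ
    have hθ1 : ∀ n, |θ n| ≤ 1 := by
      intro n; rw [hθ]; dsimp only; split
      · exact hε n
      · norm_num
    obtain ⟨w, hw, hwle⟩ := hK v θ hθ1
    have hsupp : ∀ n ∉ s, (θ n * ⟪v, y n⟫) • x n = 0 := by
      intro n hn; simp [hθ, hn]
    have hfin : HasSum (fun n => (θ n * ⟪v, y n⟫) • x n)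
        (∑ n ∈ s, (θ n * ⟪v, y n⟫) • x n) :=
      hasSum_sum_of_ne_finset_zero hsupp
    have hwval : w = ∑ n ∈ s, ε n • a n := by
      rw [hw.unique hfin]
      refine Finset.sum_congr rfl fun n hn => ?_
      simp [hθ, hn, ha, mul_smul]
    have hnorm : ∀ n, ‖a n‖ ^ 2 = |⟪v, y n⟫| ^ 2 * ‖x n‖ ^ 2 := by
      intro n
      rw [ha]; dsimp only
      rw [norm_smul, Real.norm_eq_abs, mul_pow]
    calc ∑ n ∈ s, |⟪v, y n⟫| ^ 2 * ‖x n‖ ^ 2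
        = ∑ n ∈ s, ‖a n‖ ^ 2 := by simp [hnorm]
      _ ≤ ‖∑ n ∈ s, ε n • a n‖ ^ 2 := hle
      _ = ‖w‖ ^ 2 := by rw [hwval]
      _ ≤ (K * ‖v‖) ^ 2 := pow_le_pow_left₀ (norm_nonneg _) hwle 2
      _ = K ^ 2 * ‖v‖ ^ 2 := by ring
  have hnn : ∀ (v : H) (n : ℕ), 0 ≤ |⟪v, y n⟫| ^ 2 * ‖x n‖ ^ 2 := fun v n =>
    mul_nonneg (sq_nonneg _) (sq_nonneg _)
  have main : ∀ v : H, Summable (fun n => |⟪v, y n⟫| ^ 2 * ‖x n‖ ^ 2) ∧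
      ∑' n, |⟪v, y n⟫| ^ 2 * ‖x n‖ ^ 2 ≤ K ^ 2 * ‖v‖ ^ 2 := by
    intro v
    have hs : Summable (fun n => |⟪v, y n⟫| ^ 2 * ‖x n‖ ^ 2) :=
      summable_of_sum_le (hnn v) (key v)
    exact ⟨hs, Summable.tsum_le_of_sum_le hs (key v)⟩
  refine ⟨main, ?_⟩
  rintro ⟨c, hc, hcx⟩
  refine ⟨K ^ 2 / c ^ 2, fun v => ?_⟩
  obtain ⟨hs, hts⟩ := main v
  have hcomp : ∀ n, |⟪v, y n⟫| ^ 2 ≤ c⁻¹ ^ 2 * (|⟪v, y n⟫| ^ 2 * ‖x n‖ ^ 2) := by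
    intro n
    have h1 : c ^ 2 ≤ ‖x n‖ ^ 2 := pow_le_pow_left₀ hc.le (hcx n) 2
    have h2 : (0:ℝ) < c ^ 2 := by positivity
    calc |⟪v, y n⟫| ^ 2 = c⁻¹ ^ 2 * (|⟪v, y n⟫| ^ 2 * c ^ 2) := by
          field_simp
      _ ≤ c⁻¹ ^ 2 * (|⟪v, y n⟫| ^ 2 * ‖x n‖ ^ 2) := by gcongr
  have hs2 : Summable (fun n => |⟪v, y n⟫| ^ 2) :=
    Summable.of_nonneg_of_le (fun n => sq_nonneg _) hcomp (hs.mul_left _)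
  refine ⟨hs2, ?_⟩
  calc ∑' n, |⟪v, y n⟫| ^ 2
      ≤ ∑' n, c⁻¹ ^ 2 * (|⟪v, y n⟫| ^ 2 * ‖x n‖ ^ 2) :=
        Summable.tsum_le_tsum hcomp hs2 (hs.mul_left _)
    _ = c⁻¹ ^ 2 * ∑' n, |⟪v, y n⟫| ^ 2 * ‖x n‖ ^ 2 := tsum_mul_left
    _ ≤ c⁻¹ ^ 2 * (K ^ 2 * ‖v‖ ^ 2) := by
        exact mul_le_mul_of_nonneg_left hts (by positivity)
    _ = K ^ 2 / c ^ 2 * ‖v‖ ^ 2 := by field_simp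
end

section
/- Let $H$ be a Hilbert space and $\{(x_n, y_n)\}_{n=1}^\infty$ an unconditional Schauder frame in $H$. If $\inf_n \|x_n\| > 0$ and $\inf_n \|y_n\| > 0$, then $\{x_n\}$ and $\{y_n\}$ are both frames in $H$. -/
open scoped RealInnerProductSpace

/-- Sign choice lemma: in a real inner product space, for any finite family one can
choose signs so that the squared norm of the signed sum dominates the sum of squared
norms (parallelogram law / Rademacher averaging). -/
lemma aux_sign_lower {H : Type*} [NormedAddCommGroup H] [InnerProductSpace ℝ H]
    (u : ℕ → H) (F : Finset ℕ) :
    ∃ ε : ℕ → ℝ, (∀ n, ε n = 1 ∨ ε n = -1) ∧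
      ∑ n ∈ F, ‖u n‖ ^ 2 ≤ ‖∑ n ∈ F, ε n • u n‖ ^ 2 := by
  classical
  induction F using Finset.induction_on with
  | empty => exact ⟨fun _ => 1, fun _ => Or.inl rfl, by simp⟩
  | @insert a F ha ih =>
    obtain ⟨ε, hε, hle⟩ := ih
    set s := ∑ n ∈ F, ε n • u n with hs
    have hpar : ‖s + u a‖ ^ 2 + ‖s - u a‖ ^ 2 = 2 * ‖s‖ ^ 2 + 2 * ‖u a‖ ^ 2 := by
      rw [norm_add_sq_real, norm_sub_sq_real]; ring
    have hmax : ‖s‖ ^ 2 + ‖u a‖ ^ 2 ≤ ‖s + u a‖ ^ 2 ∨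
        ‖s‖ ^ 2 + ‖u a‖ ^ 2 ≤ ‖s - u a‖ ^ 2 := by
      by_contra h
      push_neg at h
      nlinarith [h.1, h.2]
    rcases hmax with hm | hm
    · refine ⟨Function.update ε a 1, ?_, ?_⟩
      · intro n
        rcases eq_or_ne n a with rfl | hn
        · simp
        · simpa [Function.update_of_ne hn] using hε n
      · rw [Finset.sum_insert ha, Finset.sum_insert ha]
        have hrest : ∑ n ∈ F, Function.update ε a 1 n • u n = s := by
          refine Finset.sum_congr rfl fun n hn => ?_
          have hne : n ≠ a := fun h => ha (h ▸ hn)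
          rw [Function.update_of_ne hne]
        rw [hrest, Function.update_self, one_smul]
        have : u a + s = s + u a := add_comm _ _
        rw [this]
        calc ‖u a‖ ^ 2 + ∑ n ∈ F, ‖u n‖ ^ 2 ≤ ‖u a‖ ^ 2 + ‖s‖ ^ 2 := by linarith
          _ ≤ ‖s + u a‖ ^ 2 := by linarith
    · refine ⟨Function.update ε a (-1), ?_, ?_⟩
      · intro n
        rcases eq_or_ne n a with rfl | hn
        · simp
        · simpa [Function.update_of_ne hn] using hε n
      · rw [Finset.sum_insert ha, Finset.sum_insert ha]
        have hrest : ∑ n ∈ F, Function.update ε a (-1) n • u n = s := by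
          refine Finset.sum_congr rfl fun n hn => ?_
          have hne : n ≠ a := fun h => ha (h ▸ hn)
          rw [Function.update_of_ne hne]
        rw [hrest, Function.update_self, neg_one_smul]
        have : -u a + s = s - u a := by abel
        rw [this]
        calc ‖u a‖ ^ 2 + ∑ n ∈ F, ‖u n‖ ^ 2 ≤ ‖u a‖ ^ 2 + ‖s‖ ^ 2 := by linarith
          _ ≤ ‖s - u a‖ ^ 2 := by linarith

/-- Partial sums of a summable family are uniformly bounded. -/
lemma aux_bounded_sums {H : Type*} [NormedAddCommGroup H] [CompleteSpace H] {f : ℕ → H}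
    (hf : Summable f) : ∃ M : ℝ, ∀ F : Finset ℕ, ‖∑ n ∈ F, f n‖ ≤ M := by
  classical
  obtain ⟨s, hs⟩ := summable_iff_vanishing.mp hf (Metric.closedBall 0 1)
    (Metric.closedBall_mem_nhds 0 one_pos)
  refine ⟨(∑ n ∈ s, ‖f n‖) + 1, fun F => ?_⟩
  rw [← Finset.sum_inter_add_sum_sdiff F s f]
  refine (norm_add_le _ _).trans (add_le_add ?_ ?_)
  · exact (norm_sum_le _ _).trans (Finset.sum_le_sum_of_subset_of_nonneg
      Finset.inter_subset_right (fun i _ _ => norm_nonneg _))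
  · have := hs (F \ s) Finset.sdiff_disjoint
    simpa [Metric.mem_closedBall, dist_zero_right] using this

/-- if `{(x_n, y_n)}` is an unconditional Schauder frame in a Hilbert
space `H` with `inf_n ‖x_n‖ > 0` and `inf_n ‖y_n‖ > 0`, then both `{x_n}` and `{y_n}`
are frames in `H`. -/
theorem unconditional_frame_both_frames
    (H : Type*) [NormedAddCommGroup H] [InnerProductSpace ℝ H] [CompleteSpace H]
    (x y : ℕ → H)
    (hframe : ∀ v : H, HasSum (fun n => ⟪v, y n⟫ • x n) v)
    (hx : ∃ c > 0, ∀ n, c ≤ ‖x n‖) (hy : ∃ c > 0, ∀ n, c ≤ ‖y n‖) :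
    (∃ A B : ℝ, 0 < A ∧ ∀ v : H, Summable (fun n => |⟪v, x n⟫| ^ 2) ∧
      A * ‖v‖ ^ 2 ≤ ∑' n, |⟪v, x n⟫| ^ 2 ∧ ∑' n, |⟪v, x n⟫| ^ 2 ≤ B * ‖v‖ ^ 2) ∧
    (∃ A B : ℝ, 0 < A ∧ ∀ v : H, Summable (fun n => |⟪v, y n⟫| ^ 2) ∧
      A * ‖v‖ ^ 2 ≤ ∑' n, |⟪v, y n⟫| ^ 2 ∧ ∑' n, |⟪v, y n⟫| ^ 2 ≤ B * ‖v‖ ^ 2) := by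
  classical
  obtain ⟨c, hc, hcx⟩ := hx
  obtain ⟨d, hd, hdy⟩ := hy
  -- The family of signed partial sum operators.
  let Sgn : Type := {ε : ℕ → ℝ // ∀ n, ε n = 1 ∨ ε n = -1}
  let g : Finset ℕ × Sgn → H →L[ℝ] H := fun p =>
    ∑ n ∈ p.1, p.2.1 n • ((innerSL ℝ (y n)).smulRight (x n))
  have hg_apply : ∀ (F : Finset ℕ) (ε : Sgn) (v : H),
      g (F, ε) v = ∑ n ∈ F, ε.1 n • (⟪v, y n⟫ • x n) := by
    intro F ε v
    simp only [g, ContinuousLinearMap.sum_apply, ContinuousLinearMap.smul_apply,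
      ContinuousLinearMap.smulRight_apply, innerSL_apply_apply]
    exact Finset.sum_congr rfl fun n _ => by rw [real_inner_comm]
  -- Pointwise boundedness (from unconditional convergence).
  have hpt : ∀ v : H, ∃ C, ∀ p : Finset ℕ × Sgn, ‖g p v‖ ≤ C := by
    intro v
    obtain ⟨M, hM⟩ := aux_bounded_sums (hframe v).summable
    refine ⟨M + M, fun p => ?_⟩
    obtain ⟨F, ε⟩ := p
    have h1 : g (F, ε) v = (∑ n ∈ F.filter (fun n => ε.1 n = 1), ⟪v, y n⟫ • x n)
        - ∑ n ∈ F.filter (fun n => ¬ ε.1 n = 1), ⟪v, y n⟫ • x n := by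
      rw [hg_apply, ← Finset.sum_filter_add_sum_filter_not F (fun n => ε.1 n = 1)
        (fun n => ε.1 n • (⟪v, y n⟫ • x n))]
      rw [sub_eq_add_neg]
      congr 1
      · refine Finset.sum_congr rfl fun n hn => ?_
        rw [(Finset.mem_filter.mp hn).2, one_smul]
      · rw [← Finset.sum_neg_distrib]
        refine Finset.sum_congr rfl fun n hn => ?_
        rcases ε.2 n with h | h
        · exact absurd h (Finset.mem_filter.mp hn).2
        · rw [h, neg_one_smul]
    rw [h1]
    exact (norm_sub_le _ _).trans (add_le_add (hM _) (hM _))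
  obtain ⟨C₀, hC₀⟩ := banach_steinhaus hpt
  set C : ℝ := |C₀| + 1 with hCdef
  have hC1 : (0:ℝ) < C := by positivity
  have hCop : ∀ (F : Finset ℕ) (ε : Sgn) (v : H), ‖g (F, ε) v‖ ≤ C * ‖v‖ := by
    intro F ε v
    refine ContinuousLinearMap.le_of_opNorm_le _ ?_ v
    calc ‖g (F, ε)‖ ≤ C₀ := hC₀ _
      _ ≤ C := by rw [hCdef]; have := le_abs_self C₀; linarith
  -- Upper bound for the y-coefficients.
  have hyub : ∀ (v : H) (F : Finset ℕ),
      ∑ n ∈ F, |⟪v, y n⟫| ^ 2 ≤ (C ^ 2 / c ^ 2) * ‖v‖ ^ 2 := by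
    intro v F
    obtain ⟨ε, hε, hle⟩ := aux_sign_lower (fun n => ⟪v, y n⟫ • x n) F
    have h2 : ‖∑ n ∈ F, ε n • (⟪v, y n⟫ • x n)‖ ≤ C * ‖v‖ := by
      have := hCop F ⟨ε, hε⟩ v
      rwa [hg_apply] at this
    have h3 : ∑ n ∈ F, ‖(⟪v, y n⟫ • x n)‖ ^ 2 ≤ (C * ‖v‖) ^ 2 := by
      refine hle.trans ?_
      exact pow_le_pow_left₀ (norm_nonneg _) h2 2
    have h4 : ∀ n ∈ F, c ^ 2 * |⟪v, y n⟫| ^ 2 ≤ ‖(⟪v, y n⟫ • x n)‖ ^ 2 := by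
      intro n _
      rw [norm_smul, mul_pow, Real.norm_eq_abs]
      have hxn : c ^ 2 ≤ ‖x n‖ ^ 2 := pow_le_pow_left₀ hc.le (hcx n) 2
      have : (0:ℝ) ≤ |⟪v, y n⟫| ^ 2 := by positivity
      nlinarith
    have h5 : c ^ 2 * ∑ n ∈ F, |⟪v, y n⟫| ^ 2 ≤ (C * ‖v‖) ^ 2 := by
      rw [Finset.mul_sum]
      exact (Finset.sum_le_sum h4).trans h3
    rw [div_mul_eq_mul_div, le_div_iff₀ (by positivity : (0:ℝ) < c ^ 2)]
    calc (∑ n ∈ F, |⟪v, y n⟫| ^ 2) * c ^ 2 = c ^ 2 * ∑ n ∈ F, |⟪v, y n⟫| ^ 2 := by ring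
      _ ≤ (C * ‖v‖) ^ 2 := h5
      _ = C ^ 2 * ‖v‖ ^ 2 := by ring
  -- Upper bound for the x-coefficients (duality trick).
  have hxub : ∀ (v : H) (F : Finset ℕ),
      ∑ n ∈ F, |⟪v, x n⟫| ^ 2 ≤ (C ^ 2 / d ^ 2) * ‖v‖ ^ 2 := by
    intro v F
    obtain ⟨ε, hε, hle⟩ := aux_sign_lower (fun n => ⟪v, x n⟫ • y n) F
    set w : H := ∑ n ∈ F, ε n • (⟪v, x n⟫ • y n) with hw
    have hwle : ‖w‖ ≤ C * ‖v‖ := by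
      have hkey : ‖w‖ ^ 2 = ⟪v, g (F, ⟨ε, hε⟩) w⟫ := by
        rw [hg_apply, ← real_inner_self_eq_norm_sq, hw, sum_inner, inner_sum]
        refine Finset.sum_congr rfl fun n _ => ?_
        rw [real_inner_smul_left, real_inner_smul_left, real_inner_smul_right,
          real_inner_smul_right]
        rw [real_inner_comm (y n) w]
        ring
      have h2 : ⟪v, g (F, ⟨ε, hε⟩) w⟫ ≤ ‖v‖ * (C * ‖w‖) :=
        (real_inner_le_norm _ _).trans (mul_le_mul_of_nonneg_left (hCop F ⟨ε, hε⟩ w)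
          (norm_nonneg v))
      have h3 : ‖w‖ ^ 2 ≤ ‖v‖ * (C * ‖w‖) := hkey ▸ h2
      rcases eq_or_lt_of_le (norm_nonneg w) with h0 | h0
      · rw [← h0]; positivity
      · nlinarith
    have h3 : ∑ n ∈ F, ‖(⟪v, x n⟫ • y n)‖ ^ 2 ≤ (C * ‖v‖) ^ 2 :=
      hle.trans (pow_le_pow_left₀ (norm_nonneg _) hwle 2)
    have h4 : ∀ n ∈ F, d ^ 2 * |⟪v, x n⟫| ^ 2 ≤ ‖(⟪v, x n⟫ • y n)‖ ^ 2 := by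
      intro n _
      rw [norm_smul, mul_pow, Real.norm_eq_abs]
      have hyn : d ^ 2 ≤ ‖y n‖ ^ 2 := pow_le_pow_left₀ hd.le (hdy n) 2
      have : (0:ℝ) ≤ |⟪v, x n⟫| ^ 2 := by positivity
      nlinarith
    have h5 : d ^ 2 * ∑ n ∈ F, |⟪v, x n⟫| ^ 2 ≤ (C * ‖v‖) ^ 2 := by
      rw [Finset.mul_sum]
      exact (Finset.sum_le_sum h4).trans h3
    rw [div_mul_eq_mul_div, le_div_iff₀ (by positivity : (0:ℝ) < d ^ 2)]
    calc (∑ n ∈ F, |⟪v, x n⟫| ^ 2) * d ^ 2 = d ^ 2 * ∑ n ∈ F, |⟪v, x n⟫| ^ 2 := by ring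
      _ ≤ (C * ‖v‖) ^ 2 := h5
      _ = C ^ 2 * ‖v‖ ^ 2 := by ring
  -- Summability and tsum upper bounds.
  have hxsummable : ∀ v : H, Summable (fun n => |⟪v, x n⟫| ^ 2) := fun v =>
    summable_of_sum_le (fun n => by positivity) (hxub v)
  have hysummable : ∀ v : H, Summable (fun n => |⟪v, y n⟫| ^ 2) := fun v =>
    summable_of_sum_le (fun n => by positivity) (hyub v)
  have hxtsum : ∀ v : H, ∑' n, |⟪v, x n⟫| ^ 2 ≤ (C ^ 2 / d ^ 2) * ‖v‖ ^ 2 := fun v =>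
    Summable.tsum_le_of_sum_le (hxsummable v) (hxub v)
  have hytsum : ∀ v : H, ∑' n, |⟪v, y n⟫| ^ 2 ≤ (C ^ 2 / c ^ 2) * ‖v‖ ^ 2 := fun v =>
    Summable.tsum_le_of_sum_le (hysummable v) (hyub v)
  -- Cauchy–Schwarz: ‖v‖⁴ ≤ (∑'|⟪v,y⟫|²)(∑'|⟪v,x⟫|²).
  have hCS : ∀ v : H, ‖v‖ ^ 4 ≤ (∑' n, |⟪v, y n⟫| ^ 2) * (∑' n, |⟪v, x n⟫| ^ 2) := by
    intro v
    set Sy := ∑' n, |⟪v, y n⟫| ^ 2 with hSy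
    set Sx := ∑' n, |⟪v, x n⟫| ^ 2 with hSx
    have hSy0 : 0 ≤ Sy := tsum_nonneg fun n => by positivity
    have hSx0 : 0 ≤ Sx := tsum_nonneg fun n => by positivity
    have hsum : HasSum (fun n => ⟪v, y n⟫ * ⟪v, x n⟫) (‖v‖ ^ 2) := by
      have h := (hframe v).mapL (innerSL ℝ v)
      simpa only [innerSL_apply_apply, real_inner_smul_right, real_inner_self_eq_norm_sq]
        using h
    -- bound finite sums of |a||b| by √(Sy·Sx)
    have hfin : ∀ F : Finset ℕ, ∑ n ∈ F, |⟪v, y n⟫| * |⟪v, x n⟫| ≤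
        Real.sqrt (Sy * Sx) := by
      intro F
      have h1 : (∑ n ∈ F, |⟪v, y n⟫| * |⟪v, x n⟫|) ^ 2 ≤
          (∑ n ∈ F, |⟪v, y n⟫| ^ 2) * (∑ n ∈ F, |⟪v, x n⟫| ^ 2) :=
        Finset.sum_mul_sq_le_sq_mul_sq F _ _
      have h2 : (∑ n ∈ F, |⟪v, y n⟫| ^ 2) * (∑ n ∈ F, |⟪v, x n⟫| ^ 2) ≤ Sy * Sx := by
        refine mul_le_mul ?_ ?_ (Finset.sum_nonneg fun n _ => by positivity) hSy0
        · exact Summable.sum_le_tsum F (fun n _ => by positivity) (hysummable v)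
        · exact Summable.sum_le_tsum F (fun n _ => by positivity) (hxsummable v)
      have h0 : 0 ≤ ∑ n ∈ F, |⟪v, y n⟫| * |⟪v, x n⟫| :=
        Finset.sum_nonneg fun n _ => mul_nonneg (abs_nonneg _) (abs_nonneg _)
      have := Real.sqrt_le_sqrt (h1.trans h2)
      rwa [Real.sqrt_sq h0] at this
    have habsum : Summable (fun n => |⟪v, y n⟫| * |⟪v, x n⟫|) :=
      summable_of_sum_le (fun n => mul_nonneg (abs_nonneg _) (abs_nonneg _)) hfin
    have h3 : ‖v‖ ^ 2 ≤ ∑' n, |⟪v, y n⟫| * |⟪v, x n⟫| := by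
      rw [← hsum.tsum_eq]
      refine Summable.tsum_le_tsum (fun n => ?_) hsum.summable habsum
      calc ⟪v, y n⟫ * ⟪v, x n⟫ ≤ |⟪v, y n⟫ * ⟪v, x n⟫| := le_abs_self _
        _ = |⟪v, y n⟫| * |⟪v, x n⟫| := abs_mul _ _
    have h4 : ‖v‖ ^ 2 ≤ Real.sqrt (Sy * Sx) :=
      h3.trans (Summable.tsum_le_of_sum_le habsum hfin)
    have h5 : (‖v‖ ^ 2) ^ 2 ≤ Real.sqrt (Sy * Sx) ^ 2 :=
      pow_le_pow_left₀ (by positivity) h4 2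
    rwa [Real.sq_sqrt (mul_nonneg hSy0 hSx0), show (‖v‖ ^ 2) ^ 2 = ‖v‖ ^ 4 by ring] at h5
  -- Assemble.
  constructor
  · refine ⟨c ^ 2 / C ^ 2, C ^ 2 / d ^ 2, by positivity, fun v => ?_⟩
    refine ⟨hxsummable v, ?_, hxtsum v⟩
    have hSy0 : 0 ≤ ∑' n, |⟪v, y n⟫| ^ 2 := tsum_nonneg fun n => by positivity
    have hSx0 : 0 ≤ ∑' n, |⟪v, x n⟫| ^ 2 := tsum_nonneg fun n => by positivity
    have h1 := hCS v
    have h2 := hytsum v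
    have hc2 : (0:ℝ) < c ^ 2 := by positivity
    have h2' : c ^ 2 * (∑' n, |⟪v, y n⟫| ^ 2) ≤ C ^ 2 * ‖v‖ ^ 2 := by
      rw [div_mul_eq_mul_div, le_div_iff₀ hc2] at h2; linarith
    rw [div_mul_eq_mul_div, div_le_iff₀ (by positivity : (0:ℝ) < C ^ 2)]
    rcases eq_or_ne v 0 with rfl | hv
    · simp [hSx0]
    · have hv0 : (0:ℝ) < ‖v‖ := norm_pos_iff.mpr hv
      have hC2 : (0:ℝ) < C ^ 2 := by positivity
      nlinarith [mul_le_mul_of_nonneg_left h1 hc2.le,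
        mul_le_mul_of_nonneg_right h2' hSx0, mul_pos hv0 hv0, hSx0]
  · refine ⟨d ^ 2 / C ^ 2, C ^ 2 / c ^ 2, by positivity, fun v => ?_⟩
    refine ⟨hysummable v, ?_, hytsum v⟩
    have hSy0 : 0 ≤ ∑' n, |⟪v, y n⟫| ^ 2 := tsum_nonneg fun n => by positivity
    have hSx0 : 0 ≤ ∑' n, |⟪v, x n⟫| ^ 2 := tsum_nonneg fun n => by positivity
    have h1 := hCS v
    have h2 := hxtsum v
    have hd2 : (0:ℝ) < d ^ 2 := by positivity
    have h2' : d ^ 2 * (∑' n, |⟪v, x n⟫| ^ 2) ≤ C ^ 2 * ‖v‖ ^ 2 := by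
      rw [div_mul_eq_mul_div, le_div_iff₀ hd2] at h2; linarith
    rw [div_mul_eq_mul_div, div_le_iff₀ (by positivity : (0:ℝ) < C ^ 2)]
    rcases eq_or_ne v 0 with rfl | hv
    · simp [hSy0]
    · have hv0 : (0:ℝ) < ‖v‖ := norm_pos_iff.mpr hv
      have hC2 : (0:ℝ) < C ^ 2 := by positivity
      nlinarith [mul_le_mul_of_nonneg_left h1 hd2.le,
        mul_le_mul_of_nonneg_right h2' hSy0, mul_pos hv0 hv0, hSy0]
end

section
/- Let $\{(x_j, x_j^*)\}_{j=1}^\infty$ be a $K$-unconditional Schauder frame in a Banach space $X$ where all $\|x_j\| = 1$, and suppose $X$ has cotype 2 with constant $C$. Then for every $x \in X$, $\left(\sum_{j=1}^\infty |x_j^*(x)|^2\right)^{1/2} \le C K \|x\|$. -/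
lemma abs_rademacher_le (n : ℕ) (t : ℝ) : |rademacher n t| ≤ 1 := by
  unfold rademacher Real.sign
  split_ifs <;> norm_num

lemma measurable_sign' : Measurable Real.sign := by
  unfold Real.sign
  exact Measurable.ite measurableSet_Iio measurable_const
    (Measurable.ite measurableSet_Ioi measurable_const measurable_const)

lemma measurable_rademacher (n : ℕ) : Measurable (rademacher n) :=
  measurable_sign'.comp (by fun_prop)

open MeasureTheory in
/-- if `{(x_j, x_j^*)}` is a `K`-unconditional Schauder frame in a Banach
space `X` with `‖x_j‖ = 1` for all `j`, and `X` has cotype 2 with constant `C`, then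
`(∑_j |x_j^*(x)|²)^{1/2} ≤ C K ‖x‖` for every `x ∈ X`. -/
theorem frame_coefficients_l2_estimate
    (X : Type*) [NormedAddCommGroup X] [NormedSpace ℝ X] [CompleteSpace X]
    (x : ℕ → X) (xs : ℕ → (X →L[ℝ] ℝ)) (K C : ℝ)
    (hnorm : ∀ j, ‖x j‖ = 1)
    (hframe : ∀ v : X, HasSum (fun j => xs j v • x j) v)
    (hK : ∀ (v : X) (θ : ℕ → ℝ), (∀ j, |θ j| ≤ 1) →
      ∃ s, HasSum (fun j => (θ j * xs j v) • x j) s ∧ ‖s‖ ≤ K * ‖v‖)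
    (hC : ∀ (N : ℕ) (v : Fin N → X),
      (∑ j, ‖v j‖ ^ 2) ^ (1/2 : ℝ) ≤
        C * ∫ t in Set.Ioo (0:ℝ) 1, ‖∑ j : Fin N, rademacher ((j : ℕ) + 1) t • v j‖)
    (v : X) :
    Summable (fun j => |xs j v| ^ 2) ∧
      (∑' j, |xs j v| ^ 2) ^ (1/2 : ℝ) ≤ C * K * ‖v‖ := by
  obtain ⟨s0, hs0, hs0le⟩ := hK v 0 (fun j => by simp)
  have hKv : 0 ≤ K * ‖v‖ := le_trans (norm_nonneg s0) hs0le
  have hC0 : 0 ≤ C := by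
    by_contra h
    push_neg at h
    have h1 := hC 1 (fun _ => x 0)
    have hI : 0 ≤ ∫ t in Set.Ioo (0:ℝ) 1, ‖∑ j : Fin 1, rademacher ((j:ℕ)+1) t • x 0‖ :=
      integral_nonneg fun t => norm_nonneg _
    have h2 : (1:ℝ) ≤ C * ∫ t in Set.Ioo (0:ℝ) 1,
        ‖∑ j : Fin 1, rademacher ((j:ℕ)+1) t • x 0‖ := by
      simpa [hnorm] using h1
    nlinarith
  set B : ℝ := C * (K * ‖v‖) with hB
  have hB0 : 0 ≤ B := mul_nonneg hC0 hKv
  have key : ∀ N : ℕ, ∑ j ∈ Finset.range N, |xs j v| ^ 2 ≤ B ^ 2 := by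
    intro N
    set w : Fin N → X := fun j => xs (j : ℕ) v • x (j : ℕ) with hw
    have hnw : ∀ j : Fin N, ‖w j‖ = |xs (j : ℕ) v| := by
      intro j; simp [hw, norm_smul, hnorm]
    -- pointwise bound on the randomized sums
    have hpt : ∀ t : ℝ, ‖∑ j : Fin N, rademacher ((j:ℕ)+1) t • w j‖ ≤ K * ‖v‖ := by
      intro t
      set θ : ℕ → ℝ := fun j => if j < N then rademacher (j+1) t else 0 with hθ
      have hθ1 : ∀ j, |θ j| ≤ 1 := by
        intro j
        simp only [hθ]
        split
        · exact abs_rademacher_le _ _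
        · simp
      obtain ⟨s, hs, hsle⟩ := hK v θ hθ1
      have hfin : HasSum (fun j => (θ j * xs j v) • x j)
          (∑ j ∈ Finset.range N, (θ j * xs j v) • x j) := by
        apply hasSum_sum_of_ne_finset_zero
        intro j hj
        simp only [Finset.mem_range, not_lt] at hj
        simp [hθ, Nat.not_lt.mpr hj]
      have hse : s = ∑ j ∈ Finset.range N, (θ j * xs j v) • x j := hs.unique hfin
      have hsum_eq : ∑ j ∈ Finset.range N, (θ j * xs j v) • x j
          = ∑ j : Fin N, rademacher ((j:ℕ)+1) t • w j := by
        rw [← Fin.sum_univ_eq_sum_range]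
        refine Finset.sum_congr rfl fun j _ => ?_
        simp [hθ, j.isLt, hw, mul_smul]
      rw [hse, hsum_eq] at hsle
      exact hsle
    -- integrability
    have hint : Integrable (fun t => ‖∑ j : Fin N, rademacher ((j:ℕ)+1) t • w j‖)
        (volume.restrict (Set.Ioo (0:ℝ) 1)) := by
      apply Integrable.norm
      apply integrable_finset_sum
      intro j _
      apply Integrable.smul_const
      refine (integrable_const (1:ℝ)).mono'
        ((measurable_rademacher _).aestronglyMeasurable) ?_
      exact Filter.Eventually.of_forall fun t => by
        simpa [Real.norm_eq_abs] using abs_rademacher_le ((j:ℕ)+1) t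
    have hIle : (∫ t in Set.Ioo (0:ℝ) 1, ‖∑ j : Fin N, rademacher ((j:ℕ)+1) t • w j‖)
        ≤ K * ‖v‖ := by
      have hmono := setIntegral_mono_on hint (integrable_const (K * ‖v‖))
        measurableSet_Ioo (fun t _ => hpt t)
      simpa [Real.volume_Ioo] using hmono
    have h1 : (∑ j : Fin N, |xs (j:ℕ) v| ^ 2) ^ (1/2:ℝ) ≤ B := by
      have h2 := hC N w
      simp only [hnw] at h2
      exact h2.trans (mul_le_mul_of_nonneg_left hIle hC0)
    have ha : 0 ≤ ∑ j : Fin N, |xs (j:ℕ) v| ^ 2 :=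
      Finset.sum_nonneg fun j _ => by positivity
    have haeq : (∑ j : Fin N, |xs (j:ℕ) v| ^ 2)
        = ((∑ j : Fin N, |xs (j:ℕ) v| ^ 2) ^ (1/2:ℝ)) ^ 2 := by
      rw [← Real.rpow_natCast ((∑ j : Fin N, |xs (j:ℕ) v| ^ 2) ^ (1/2:ℝ)) 2,
        ← Real.rpow_mul ha]
      norm_num
    calc ∑ j ∈ Finset.range N, |xs j v| ^ 2
        = ∑ j : Fin N, |xs (j:ℕ) v| ^ 2 := (Fin.sum_univ_eq_sum_range _ N).symm
      _ = ((∑ j : Fin N, |xs (j:ℕ) v| ^ 2) ^ (1/2:ℝ)) ^ 2 := haeq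
      _ ≤ B ^ 2 := pow_le_pow_left₀ (Real.rpow_nonneg ha _) h1 2
  have hsummable : Summable (fun j => |xs j v| ^ 2) :=
    summable_of_sum_range_le (fun n => by positivity) key
  refine ⟨hsummable, ?_⟩
  have htsum : (∑' j, |xs j v| ^ 2) ≤ B ^ 2 :=
    Summable.tsum_le_of_sum_range_le hsummable key
  have ht0 : 0 ≤ ∑' j, |xs j v| ^ 2 := tsum_nonneg fun j => by positivity
  have := Real.rpow_le_rpow ht0 htsum (by norm_num : (0:ℝ) ≤ 1/2)
  have hBeq : (B ^ 2 : ℝ) ^ (1/2:ℝ) = B := by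
    rw [← Real.rpow_natCast B 2, ← Real.rpow_mul hB0]
    norm_num
  rw [hBeq] at this
  calc (∑' j, |xs j v| ^ 2) ^ (1/2:ℝ) ≤ B := this
    _ = C * K * ‖v‖ := by rw [hB, mul_assoc]
end
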